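/- arXiv:1003.6003 — 9 statements merged into one kernel-verified Lean document; each statement's English description precedes it below -/
import Mathlib

section
/- Let X be a real Hilbert space and let φ : X → (-∞, +∞] be a convex, lower semicontinuous function that is not identically +∞ (convexity meaning φ(t x + (1-t) y) ≤ t φ(x) + (1-t) φ(y) in the extended reals for all x, y ∈ X and t ∈ [0,1]). Define the subdifferential ∂φ(x) = { p ∈ X : φ(x) + ⟨p, w - x⟩ ≤ φ(w) for all w ∈ X }. Then the operator x ↦ ∂φ(x) is maximal monotone. -/
open scoped InnerProductSpace

/-- A multivalued operator `A : X → 𝒫(X)` is monotone if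
`⟪v₁ - v₂, x₁ - x₂⟫ ≥ 0` whenever `v₁ ∈ A x₁`, `v₂ ∈ A x₂`. -/
def IsMonotoneOperator {X : Type*} [NormedAddCommGroup X] [InnerProductSpace ℝ X]
    (A : X → Set X) : Prop :=
  ∀ x₁ x₂ v₁ v₂, v₁ ∈ A x₁ → v₂ ∈ A x₂ → 0 ≤ ⟪v₁ - v₂, x₁ - x₂⟫_ℝ

/-- A monotone operator is maximal monotone if its graph is not properly contained
in the graph of any other monotone operator. -/
def IsMaximalMonotoneOperator {X : Type*} [NormedAddCommGroup X] [InnerProductSpace ℝ X]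
    (A : X → Set X) : Prop :=
  IsMonotoneOperator A ∧
    ∀ B : X → Set X, IsMonotoneOperator B → (∀ x, A x ⊆ B x) → B = A

/-- The subdifferential of an extended-real-valued function `φ` at `x`. -/
def Subdifferential {X : Type*} [NormedAddCommGroup X] [InnerProductSpace ℝ X]
    (φ : X → EReal) (x : X) : Set X :=
  {p : X | ∀ w : X, φ x + (⟪p, w - x⟫_ℝ : ℝ) ≤ φ w}

/-!
By Minty's criterion, a monotone operator `A` is maximal as soon as every `a` can be written as
`z + p` with `p ∈ A z`. For `A = ∂φ` such a `z` is the proximal point of `a`, the minimiser of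
`φ + ‖· - a‖² / 2`, where the first-order condition reads `a - z ∈ ∂φ z`. The minimiser exists
because a continuous affine minorant of `φ` (Hahn–Banach applied to its closed convex epigraph)
bounds this strongly convex function from below; its minimising sequences are then Cauchy, and
lower semicontinuity carries the infimum to their limit.
-/

open Filter Topology Set

theorem LowerSemicontinuous.le_of_tendsto {α γ ι : Type*} [TopologicalSpace α] [LinearOrder γ]
    [TopologicalSpace γ] [OrderTopology γ] [DenselyOrdered γ] {f : α → γ}
    (hf : LowerSemicontinuous f) {l : Filter ι} [l.NeBot] {u : ι → α} {x : α} {y : γ}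
    (hu : Tendsto u l (𝓝 x)) (hfu : Tendsto (f ∘ u) l (𝓝 y)) : f x ≤ y :=
  le_of_forall_gt_imp_ge_of_dense fun _ hc ↦ (hf.isClosed_preimage _).mem_of_tendsto hu <|
    (hfu.eventually (eventually_lt_nhds hc)).mono fun _ h ↦ h.le

theorem EReal.le_coe_iff_ne_top_and_toReal_le {x : EReal} (hx : x ≠ ⊥) {r : ℝ} :
    x ≤ r ↔ x ≠ ⊤ ∧ x.toReal ≤ r := by
  induction x using EReal.rec <;> simp_all

theorem ContinuousLinearMap.sub_sq_opNorm_div_two_le {E : Type*} [NormedAddCommGroup E]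
    [NormedSpace ℝ E] (ℓ : E →L[ℝ] ℝ) (a w : E) :
    ℓ a - ‖ℓ‖ ^ 2 / 2 ≤ ℓ w + ‖w - a‖ ^ 2 / 2 := by
  have h : |ℓ (w - a)| ≤ ‖ℓ‖ * ‖w - a‖ := ℓ.le_opNorm (w - a)
  rw [map_sub] at h
  nlinarith [neg_abs_le (ℓ w - ℓ a), sq_nonneg (‖w - a‖ - ‖ℓ‖)]

theorem StrongConvexOn.cauchySeq_of_tendsto {E : Type*} [NormedAddCommGroup E] [NormedSpace ℝ E]
    {s : Set E} {m μ : ℝ} {F : E → ℝ} (hF : StrongConvexOn s m F) (hm : 0 < m)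
    (hμ : ∀ x ∈ s, μ ≤ F x) {w : ℕ → E} (hws : ∀ n, w n ∈ s)
    (hw : Tendsto (F ∘ w) atTop (𝓝 μ)) : CauchySeq w := by
  have hdist : ∀ i j, dist (w i) (w j) ^ 2 ≤ 4 / m * (F (w i) + F (w j) - 2 * μ) := by
    intro i j
    have hab : (1 / 2 : ℝ) + 1 / 2 = 1 := by norm_num
    have hmid := hF.2 (hws i) (hws j) (by norm_num) (by norm_num) hab
    have hle := hμ _ (hF.1 (hws i) (hws j) (by norm_num) (by norm_num) hab)
    rw [dist_eq_norm, div_mul_eq_mul_div, le_div_iff₀ hm]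
    simp only [smul_eq_mul] at hmid
    nlinarith
  have hlim : Tendsto (fun p : ℕ × ℕ ↦ √(4 / m * (F (w p.1) + F (w p.2) - 2 * μ)))
      atTop (𝓝 0) := by
    have := ((hw.comp tendsto_fst).add (hw.comp tendsto_snd)).sub_const (2 * μ)
      |>.const_mul (4 / m) |>.sqrt
    simpa [two_mul, ← prod_atTop_atTop_eq] using this
  rw [cauchySeq_iff_tendsto_dist_atTop_0]
  exact squeeze_zero (fun _ ↦ dist_nonneg) (fun p ↦ Real.le_sqrt_of_sq_le (hdist p.1 p.2)) hlim

theorem ConvexOn.strongConvexOn_add_half_sq_dist {X : Type*} [NormedAddCommGroup X]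
    [InnerProductSpace ℝ X] {s : Set X} {f : X → ℝ} (hf : ConvexOn ℝ s f) (a : X) :
    StrongConvexOn s 1 fun x ↦ f x + ‖x - a‖ ^ 2 / 2 := by
  rw [strongConvexOn_iff_convex]
  refine ((hf.add ((-innerₗ X a).convexOn hf.1)).add_const (‖a‖ ^ 2 / 2)).congr fun x _ ↦ ?_
  simp only [Pi.add_apply, LinearMap.neg_apply, innerₗ_apply_apply, norm_sub_sq_real,
    real_inner_comm a x]
  ring

theorem ConvexOn.add_inner_le_of_isMinOn_add_half_sq_dist {X : Type*} [NormedAddCommGroup X]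
    [InnerProductSpace ℝ X] {s : Set X} {f : X → ℝ} (hf : ConvexOn ℝ s f) {a z w : X}
    (hz : z ∈ s) (hw : w ∈ s) (hmin : IsMinOn (fun x ↦ f x + ‖x - a‖ ^ 2 / 2) s z) :
    f z + ⟪a - z, w - z⟫_ℝ ≤ f w := by
  -- compare `z` with `z + t • (w - z)` and divide by `t`
  have hstep : ∀ t : ℝ, 0 < t → t ≤ 1 →
      f z + ⟪a - z, w - z⟫_ℝ ≤ f w + t * (‖w - z‖ ^ 2 / 2) := by
    intro t ht0 ht1
    have hconv := hf.2 hw hz ht0.le (sub_nonneg.2 ht1) (add_sub_cancel t 1)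
    have hle := isMinOn_iff.1 hmin _ (hf.1 hw hz ht0.le (sub_nonneg.2 ht1) (add_sub_cancel t 1))
    have hnorm : ‖t • w + (1 - t) • z - a‖ ^ 2
        = ‖z - a‖ ^ 2 - 2 * t * ⟪a - z, w - z⟫_ℝ + t ^ 2 * ‖w - z‖ ^ 2 := by
      rw [show t • w + (1 - t) • z - a = (z - a) + t • (w - z) by module, norm_add_sq_real,
        real_inner_smul_right, norm_smul, mul_pow, Real.norm_eq_abs, sq_abs,
        ← neg_sub a z, inner_neg_left]
      ring
    simp only [smul_eq_mul, hnorm] at hconv hle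
    nlinarith
  have hlim : Tendsto (fun t : ℝ ↦ f w + t * (‖w - z‖ ^ 2 / 2)) (𝓝[>] 0) (𝓝 (f w)) := by
    have := (tendsto_id (x := 𝓝 (0 : ℝ))).mul_const (‖w - z‖ ^ 2 / 2) |>.const_add (f w)
    simpa using this.mono_left nhdsWithin_le_nhds
  refine ge_of_tendsto hlim ?_
  filter_upwards [Ioc_mem_nhdsGT one_pos] with t ⟨ht0, ht1⟩ using hstep t ht0 ht1

theorem convexOn_toReal {E : Type*} [AddCommGroup E] [Module ℝ E] {φ : E → EReal}
    (hbot : ∀ x, φ x ≠ ⊥)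
    (hconvex : ∀ x y : E, ∀ t : ℝ, 0 ≤ t → t ≤ 1 →
      φ (t • x + (1 - t) • y) ≤ (t : EReal) * φ x + ((1 - t : ℝ) : EReal) * φ y) :
    ConvexOn ℝ {x | φ x ≠ ⊤} fun x ↦ (φ x).toReal := by
  have hcomb : ∀ ⦃x⦄, φ x ≠ ⊤ → ∀ ⦃y⦄, φ y ≠ ⊤ → ∀ ⦃a b : ℝ⦄, 0 ≤ a → 0 ≤ b → a + b = 1 →
      φ (a • x + b • y) ≤ ((a * (φ x).toReal + b * (φ y).toReal : ℝ) : EReal) := by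
    intro x hx y hy a b ha _ hab
    obtain rfl : b = 1 - a := by linarith
    rw [EReal.coe_add, EReal.coe_mul, EReal.coe_mul, EReal.coe_toReal hx (hbot x),
      EReal.coe_toReal hy (hbot y)]
    exact hconvex x y a ha (by linarith)
  refine ⟨fun x hx y hy a b ha hb hab ↦ ?_, fun x hx y hy a b ha hb hab ↦ ?_⟩
  · exact ne_top_of_le_ne_top (EReal.coe_ne_top _) (hcomb hx hy ha hb hab)
  · have h := EReal.toReal_le_toReal (hcomb hx hy ha hb hab) (hbot _) (EReal.coe_ne_top _)
    rwa [EReal.toReal_coe] at h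

theorem exists_continuousLinearMap_add_const_le {E : Type*} [NormedAddCommGroup E]
    [NormedSpace ℝ E] {φ : E → EReal} (hbot : ∀ x, φ x ≠ ⊥)
    (hf : ConvexOn ℝ {x | φ x ≠ ⊤} fun x ↦ (φ x).toReal) (hlsc : LowerSemicontinuous φ)
    (htop : ∃ x, φ x ≠ ⊤) : ∃ (ℓ : E →L[ℝ] ℝ) (c : ℝ), ∀ x, ((ℓ x + c : ℝ) : EReal) ≤ φ x := by
  obtain ⟨x₀, hx₀⟩ := htop
  set S : Set (E × ℝ) := {p | φ p.1 ≤ p.2}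
  have hmem : ∀ x, φ x ≠ ⊤ → (x, (φ x).toReal) ∈ S := fun x hx ↦
    (EReal.coe_toReal hx (hbot x)).ge
  have hSconv : Convex ℝ S := by
    convert hf.convex_epigraph using 1
    ext p
    exact EReal.le_coe_iff_ne_top_and_toReal_le (hbot p.1)
  have hSclosed : IsClosed S := hlsc.isClosed_epigraph.preimage
    (continuous_fst.prodMk (continuous_coe_real_ereal.comp continuous_snd))
  have hnot : (x₀, (φ x₀).toReal - 1) ∉ S := fun h ↦ by
    have := ((EReal.le_coe_iff_ne_top_and_toReal_le (hbot x₀)).1 h).2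
    linarith
  obtain ⟨L, u, hLu, hLS⟩ := geometric_hahn_banach_point_closed hSconv hSclosed hnot
  have hL : ∀ x t, L (x, t) = L (x, 0) + t * L (0, 1) := fun x t ↦ by
    rw [← smul_eq_mul, ← map_smul, ← map_add]
    simp
  have hx₀S := hLS _ (hmem x₀ hx₀)
  rw [hL] at hLu hx₀S
  have hc : 0 < L (0, 1) := by linarith
  -- the separating hyperplane `L = u`, solved for the `ℝ`-coordinate
  refine ⟨-(L (0, 1))⁻¹ • L.comp (.inl ℝ E ℝ), u / L (0, 1), fun x ↦ ?_⟩
  by_cases hx : φ x = ⊤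
  · simp [hx]
  have hxS := hLS _ (hmem x hx)
  rw [hL] at hxS
  rw [← EReal.coe_toReal hx (hbot x), EReal.coe_le_coe_iff]
  simp only [FunLike.coe_smul, Pi.smul_apply, ContinuousLinearMap.comp_apply,
    ContinuousLinearMap.inl_apply, smul_eq_mul]
  rw [neg_mul, ← sub_eq_neg_add, inv_mul_eq_div, ← sub_div, div_le_iff₀ hc]
  linarith

theorem exists_isMinOn_toReal_add_half_sq_dist {X : Type*} [NormedAddCommGroup X]
    [InnerProductSpace ℝ X] [CompleteSpace X] {φ : X → EReal} (hbot : ∀ x, φ x ≠ ⊥)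
    (hf : ConvexOn ℝ {x | φ x ≠ ⊤} fun x ↦ (φ x).toReal) (hlsc : LowerSemicontinuous φ)
    (htop : ∃ x, φ x ≠ ⊤) (a : X) :
    ∃ z ∈ {x | φ x ≠ ⊤}, IsMinOn (fun x ↦ (φ x).toReal + ‖x - a‖ ^ 2 / 2) {x | φ x ≠ ⊤} z := by
  set s := {x | φ x ≠ ⊤}
  set F := fun x ↦ (φ x).toReal + ‖x - a‖ ^ 2 / 2
  obtain ⟨ℓ, c, hℓ⟩ := exists_continuousLinearMap_add_const_le hbot hf hlsc htop
  have hbdd : ∀ x ∈ s, ℓ a - ‖ℓ‖ ^ 2 / 2 + c ≤ F x := fun x hx ↦ by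
    have hℓa := ℓ.sub_sq_opNorm_div_two_le a x
    have hℓx : ℓ x + c ≤ (φ x).toReal := by
      rw [← EReal.coe_le_coe_iff, EReal.coe_toReal hx (hbot x)]
      exact hℓ x
    simp only [F]
    linarith
  set μ := sInf (F '' s)
  have hμ : ∀ x ∈ s, μ ≤ F x := fun x hx ↦
    csInf_le ⟨_, forall_mem_image.2 hbdd⟩ (mem_image_of_mem F hx)
  obtain ⟨r, -, hr, hrF⟩ :=
    exists_seq_tendsto_sInf (Set.Nonempty.image F htop) ⟨_, forall_mem_image.2 hbdd⟩
  choose w hws hwr using hrF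
  have hFw : Tendsto (F ∘ w) atTop (𝓝 μ) := by
    rwa [show F ∘ w = r from funext hwr]
  obtain ⟨z, hz⟩ := cauchySeq_tendsto_of_complete <|
    (hf.strongConvexOn_add_half_sq_dist a).cauchySeq_of_tendsto one_pos hμ hws hFw
  have hq : Tendsto (fun n ↦ ‖w n - a‖ ^ 2 / 2) atTop (𝓝 (‖z - a‖ ^ 2 / 2)) :=
    ((hz.sub_const a).norm.pow 2).div_const 2
  have hφw : Tendsto (φ ∘ w) atTop (𝓝 ((μ - ‖z - a‖ ^ 2 / 2 : ℝ) : EReal)) := by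
    refine (continuous_coe_real_ereal.tendsto _).comp (hFw.sub hq) |>.congr fun n ↦ ?_
    simp [F, EReal.coe_toReal (hws n) (hbot (w n))]
  obtain ⟨hzs, hzμ⟩ := (EReal.le_coe_iff_ne_top_and_toReal_le (hbot z)).1
    (hlsc.le_of_tendsto hz hφw)
  have hFz : F z ≤ μ := by simp only [F]; linarith
  exact ⟨z, hzs, isMinOn_iff.2 fun x hx ↦ hFz.trans (hμ x hx)⟩

section Subdifferential

variable {X : Type*} [NormedAddCommGroup X] [InnerProductSpace ℝ X] {φ : X → EReal}

theorem sub_mem_subdifferential_of_isMinOn (hbot : ∀ x, φ x ≠ ⊥)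
    (hf : ConvexOn ℝ {x | φ x ≠ ⊤} fun x ↦ (φ x).toReal) {a z : X} (hz : φ z ≠ ⊤)
    (hmin : IsMinOn (fun x ↦ (φ x).toReal + ‖x - a‖ ^ 2 / 2) {x | φ x ≠ ⊤} z) :
    a - z ∈ Subdifferential φ z := by
  intro w
  by_cases hw : φ w = ⊤
  · simp [hw]
  rw [← EReal.coe_toReal hz (hbot z), ← EReal.coe_toReal hw (hbot w), ← EReal.coe_add,
    EReal.coe_le_coe_iff]
  exact hf.add_inner_le_of_isMinOn_add_half_sq_dist hz hw hmin

theorem ne_top_of_mem_subdifferential (htop : ∃ x, φ x ≠ ⊤) {x p : X}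
    (hp : p ∈ Subdifferential φ x) : φ x ≠ ⊤ := by
  obtain ⟨w, hw⟩ := htop
  intro hx
  exact hw (by simpa [hx] using hp w)

theorem isMonotoneOperator_subdifferential (hbot : ∀ x, φ x ≠ ⊥) (htop : ∃ x, φ x ≠ ⊤) :
    IsMonotoneOperator (Subdifferential φ) := by
  intro x₁ x₂ p₁ p₂ hp₁ hp₂
  have h₁ := hp₁ x₂
  have h₂ := hp₂ x₁
  rw [← EReal.coe_toReal (ne_top_of_mem_subdifferential htop hp₁) (hbot x₁),
    ← EReal.coe_toReal (ne_top_of_mem_subdifferential htop hp₂) (hbot x₂), ← EReal.coe_add,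
    EReal.coe_le_coe_iff] at h₁ h₂
  rw [← neg_sub x₁ x₂, inner_neg_right] at h₁
  rw [inner_sub_left]
  linarith

end Subdifferential

theorem IsMonotoneOperator.isMaximalMonotoneOperator {X : Type*} [NormedAddCommGroup X]
    [InnerProductSpace ℝ X] {A : X → Set X} (hA : IsMonotoneOperator A)
    (hsurj : ∀ a, ∃ z, a - z ∈ A z) : IsMaximalMonotoneOperator A := by
  refine ⟨hA, fun B hB hAB ↦ funext fun x ↦ (Set.Subset.antisymm · (hAB x)) fun v hv ↦ ?_⟩
  obtain ⟨z, hz⟩ := hsurj (x + v)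
  have hmono := hB x z v (x + v - z) hv (hAB z hz)
  rw [show v - (x + v - z) = -(x - z) by abel, inner_neg_left, real_inner_self_eq_norm_sq,
    neg_nonneg] at hmono
  obtain rfl : x = z := sub_eq_zero.1 (norm_eq_zero.1 (pow_eq_zero_iff two_ne_zero |>.1
    (le_antisymm hmono (sq_nonneg _))))
  simpa using hz

/-- The subdifferential of a proper convex lower semicontinuous function on a real
Hilbert space is a maximal monotone operator. -/
theorem subdifferential_maximal_monotone
    {X : Type*} [NormedAddCommGroup X] [InnerProductSpace ℝ X] [CompleteSpace X]
    (φ : X → EReal)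
    (hproper_bot : ∀ x, φ x ≠ ⊥)
    (hproper_top : ∃ x, φ x ≠ ⊤)
    (hconvex : ∀ x y : X, ∀ t : ℝ, 0 ≤ t → t ≤ 1 →
      φ (t • x + (1 - t) • y) ≤ (t : EReal) * φ x + ((1 - t : ℝ) : EReal) * φ y)
    (hlsc : LowerSemicontinuous φ) :
    IsMaximalMonotoneOperator (Subdifferential φ) := by
  have hf := convexOn_toReal hproper_bot hconvex
  refine (isMonotoneOperator_subdifferential hproper_bot hproper_top).isMaximalMonotoneOperator
    fun a ↦ ?_
  obtain ⟨z, hz, hmin⟩ :=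
    exists_isMinOn_toReal_add_half_sq_dist hproper_bot hf hlsc hproper_top a
  exact ⟨z, sub_mem_subdifferential_of_isMinOn hproper_bot hf hz hmin⟩
end

section
/- Let X be a real Hilbert space and A a maximal monotone operator on X. If u, û : [0, +∞) → X are two Lipschitz continuous functions such that u(t) ∈ D(A) and û(t) ∈ D(A) for all t ≥ 0, and -u'(t) ∈ A(u(t)) and -û'(t) ∈ A(û(t)) for almost every t > 0, then ‖u(t) - û(t)‖ ≤ ‖u(0) - û(0)‖ for all t ≥ 0. In particular, the solution of the Cauchy problem -u'(t) ∈ A(u(t)), u(0) = u₀, is unique. -/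
open scoped InnerProductSpace

/-!
Wherever both flows are differentiable and satisfy the inclusion,
`d/dt ‖u - û‖² = 2⟪u - û, u' - û'⟫ = -2⟪(-u') - (-û'), u - û⟫ ≤ 0`. Since `u - û` is
Lipschitz, `‖u - û‖²` is absolutely continuous on every `[0, t]`, so by the fundamental
theorem of calculus for absolutely continuous functions it is nonincreasing.
-/

open MeasureTheory Set

theorem AbsolutelyContinuousOnInterval.le_of_ae_hasDerivAt_nonpos {f : ℝ → ℝ} {a b : ℝ}
    (hf : AbsolutelyContinuousOnInterval f a b) (hab : a ≤ b)
    (hd : ∀ᵐ x ∂volume.restrict (Ioc a b), ∃ w, HasDerivAt f w x ∧ w ≤ 0) :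
    f b ≤ f a := by
  rw [← sub_nonpos, ← hf.integral_deriv_eq_sub, intervalIntegral.integral_of_le hab]
  refine integral_nonpos_of_ae (hd.mono fun x ⟨w, hw, hw0⟩ => ?_)
  simpa [hw.deriv] using hw0

theorem LipschitzOnWith.absolutelyContinuousOnInterval_norm_sq {E : Type*}
    [NormedAddCommGroup E] {f : ℝ → E} {K : NNReal} {a b : ℝ}
    (hf : LipschitzOnWith K f (uIcc a b)) :
    AbsolutelyContinuousOnInterval (‖f ·‖ ^ 2) a b := by
  have hn := (lipschitzWith_one_norm.comp_lipschitzOnWith hf).absolutelyContinuousOnInterval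
  convert hn.mul hn using 1
  ext x
  exact sq _

section Monotone

variable {X : Type*} [NormedAddCommGroup X] [InnerProductSpace ℝ X] {A : X → Set X}

theorem IsMonotoneOperator.inner_sub_nonpos (hA : IsMonotoneOperator A) {x y w z : X}
    (hw : -w ∈ A x) (hz : -z ∈ A y) : ⟪x - y, w - z⟫_ℝ ≤ 0 := by
  have := hA x y (-w) (-z) hw hz
  rw [real_inner_comm, ← neg_sub', inner_neg_right] at this
  linarith

theorem IsMonotoneOperator.hasDerivAt_norm_sub_sq_nonpos (hA : IsMonotoneOperator A)
    {u v : ℝ → X} {t : ℝ} {w z : X} (hu : HasDerivAt u w t) (hw : -w ∈ A (u t))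
    (hv : HasDerivAt v z t) (hz : -z ∈ A (v t)) :
    ∃ d, HasDerivAt (fun s => ‖u s - v s‖ ^ 2) d t ∧ d ≤ 0 :=
  ⟨_, (hu.sub hv).norm_sq, by
    simp only [Pi.sub_apply]
    linarith [hA.inner_sub_nonpos hw hz]⟩

end Monotone

theorem maximal_monotone_flow_contraction_general
    {X : Type*} [NormedAddCommGroup X] [InnerProductSpace ℝ X]
    (A : X → Set X) (hA : IsMaximalMonotoneOperator A)
    (u v : ℝ → X)
    (hu_lip : ∃ L : NNReal, LipschitzOnWith L u (Set.Ici (0 : ℝ)))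
    (hv_lip : ∃ L : NNReal, LipschitzOnWith L v (Set.Ici (0 : ℝ)))
    (hu_flow : ∀ᵐ t ∂(MeasureTheory.volume.restrict (Set.Ioi (0 : ℝ))),
      ∃ w : X, HasDerivAt u w t ∧ -w ∈ A (u t))
    (hv_flow : ∀ᵐ t ∂(MeasureTheory.volume.restrict (Set.Ioi (0 : ℝ))),
      ∃ w : X, HasDerivAt v w t ∧ -w ∈ A (v t)) :
    ∀ t : ℝ, 0 ≤ t → ‖u t - v t‖ ≤ ‖u 0 - v 0‖ := by
  obtain ⟨Lu, hu⟩ := hu_lip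
  obtain ⟨Lv, hv⟩ := hv_lip
  intro t ht
  have hIcc : uIcc 0 t ⊆ Ici 0 := by
    rw [uIcc_of_le ht]
    exact Icc_subset_Ici_self
  have hac := ((hu.sub hv).mono hIcc).absolutelyContinuousOnInterval_norm_sq
  have hderiv : ∀ᵐ s ∂volume.restrict (Ioc 0 t),
      ∃ d, HasDerivAt (fun s => ‖u s - v s‖ ^ 2) d s ∧ d ≤ 0 := by
    refine ae_restrict_of_ae_restrict_of_subset Ioc_subset_Ioi_self ?_
    filter_upwards [hu_flow, hv_flow] with s ⟨w, hw, hwA⟩ ⟨z, hz, hzA⟩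
    exact hA.1.hasDerivAt_norm_sub_sq_nonpos hw hwA hz hzA
  exact (pow_le_pow_iff_left₀ (norm_nonneg _) (norm_nonneg _) two_ne_zero).1
    (hac.le_of_ae_hasDerivAt_nonpos ht hderiv)

/-- Contraction property of the flow of a maximal monotone operator: two Lipschitz
solutions of `-u'(t) ∈ A(u(t))` on `[0,∞)` satisfy `‖u(t) - û(t)‖ ≤ ‖u(0) - û(0)‖`. -/
theorem maximal_monotone_flow_contraction
    {X : Type*} [NormedAddCommGroup X] [InnerProductSpace ℝ X] [CompleteSpace X]
    (A : X → Set X) (hA : IsMaximalMonotoneOperator A)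
    (u v : ℝ → X)
    (hu_lip : ∃ L : NNReal, LipschitzOnWith L u (Set.Ici (0 : ℝ)))
    (hv_lip : ∃ L : NNReal, LipschitzOnWith L v (Set.Ici (0 : ℝ)))
    (hu_dom : ∀ t : ℝ, 0 ≤ t → (A (u t)).Nonempty)
    (hv_dom : ∀ t : ℝ, 0 ≤ t → (A (v t)).Nonempty)
    (hu_flow : ∀ᵐ t ∂(MeasureTheory.volume.restrict (Set.Ioi (0 : ℝ))),
      ∃ w : X, HasDerivAt u w t ∧ -w ∈ A (u t))
    (hv_flow : ∀ᵐ t ∂(MeasureTheory.volume.restrict (Set.Ioi (0 : ℝ))),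
      ∃ w : X, HasDerivAt v w t ∧ -w ∈ A (v t)) :
    ∀ t : ℝ, 0 ≤ t → ‖u t - v t‖ ≤ ‖u 0 - v 0‖ :=
  maximal_monotone_flow_contraction_general A hA u v hu_lip hv_lip hu_flow hv_flow
end

section
/- Let X be a real Hilbert space and A a maximal monotone operator on X. Let u : [0, +∞) → X be Lipschitz continuous with u(t) ∈ D(A) for all t ≥ 0 and -u'(t) ∈ A(u(t)) for almost every t > 0. Then the function t ↦ inf { ‖v‖ : v ∈ A(u(t)) } is non-increasing on [0, +∞). -/
open scoped InnerProductSpace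

/-!
Monotonicity of `A` controls the flow in two ways. Tested against `v ∈ A (u s)` it gives
`d/dτ ‖u τ - u s‖ ≤ ‖v‖`, and tested against the shifted flow it makes `‖u (τ + h) - u τ‖`
non-increasing in `τ`; together, `‖u y - u x‖ ≤ ‖v‖ |y - x|` for `x, y ≥ s`, so every derivative
`u' τ` with `τ > s` has norm at most `inf ‖A (u s)‖`. These a.e. differential inequalities are
integrated using the fundamental theorem of calculus for Lipschitz functions. Finally, for times
`τₙ ↑ t` with `-u' τₙ ∈ A (u τₙ)`, a weak cluster point of `-u' τₙ` lies in `A (u t)` by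
maximality and has norm at most `inf ‖A (u s)‖`.
-/

open Set MeasureTheory Filter Topology
open scoped NNReal

theorem LipschitzOnWith.sub_le_mul_of_ae_hasDerivAt_le {f : ℝ → ℝ} {K : ℝ≥0} {a b c : ℝ}
    (hab : a ≤ b) (hf : LipschitzOnWith K f (Icc a b))
    (hd : ∀ᵐ x, x ∈ Ioo a b → ∃ d, HasDerivAt f d x ∧ d ≤ c) :
    f b - f a ≤ c * (b - a) := by
  rw [← uIcc_of_le hab] at hf
  have hac := hf.absolutelyContinuousOnInterval
  rw [← hac.integral_deriv_eq_sub, mul_comm, ← smul_eq_mul, ← intervalIntegral.integral_const]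
  refine intervalIntegral.integral_mono_ae_restrict hab hac.intervalIntegrable_deriv
    intervalIntegrable_const ?_
  rw [EventuallyLE, ← Measure.restrict_congr_set Ioo_ae_eq_Icc, ae_restrict_iff' measurableSet_Ioo]
  filter_upwards [hd] with x hx hxab
  obtain ⟨d, hfd, hdc⟩ := hx hxab
  rwa [hfd.deriv]

theorem LipschitzOnWith.norm_le_add_mul_of_ae_inner_deriv_le {E : Type*} [NormedAddCommGroup E]
    [InnerProductSpace ℝ E] {f : ℝ → E} {K : ℝ≥0} {a b c : ℝ} (hab : a ≤ b) (hc : 0 ≤ c)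
    (hf : LipschitzOnWith K f (Icc a b))
    (hd : ∀ᵐ x, x ∈ Ioo a b → ∃ f', HasDerivAt f f' x ∧ ⟪f x, f'⟫_ℝ ≤ c * ‖f x‖) :
    ‖f b‖ ≤ ‖f a‖ + c * (b - a) := by
  refine le_of_forall_pos_le_add fun ε hε => ?_
  -- A differentiable substitute for `‖f‖`.
  set ζ : ℝ → ℝ := fun x => ‖(‖f x‖ : ℂ) + ε * Complex.I‖
  have hζ : ∀ x, ζ x = √(‖f x‖ ^ 2 + ε ^ 2) := fun x => Complex.norm_add_mul_I _ _
  have hζ_lip : LipschitzOnWith K ζ (Icc a b) := by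
    have hlip : LipschitzWith 1 fun r : ℝ => ‖(r : ℂ) + ε * Complex.I‖ :=
      LipschitzWith.of_dist_le_mul fun r r' => by
        simpa [Real.dist_eq, ← Complex.ofReal_sub] using
          abs_norm_sub_norm_le ((r : ℂ) + ε * Complex.I) (r' + ε * Complex.I)
    have := (hlip.comp lipschitzWith_one_norm).comp_lipschitzOnWith hf
    rwa [one_mul, one_mul] at this
  have hζ_deriv : ∀ᵐ x, x ∈ Ioo a b → ∃ d, HasDerivAt ζ d x ∧ d ≤ c := by
    filter_upwards [hd] with x hx hxab
    obtain ⟨f', hf', hinner⟩ := hx hxab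
    have hpos : 0 < ‖f x‖ ^ 2 + ε ^ 2 := by positivity
    refine ⟨_, (funext hζ ▸ (hf'.norm_sq.add_const (ε ^ 2)).sqrt hpos.ne'), ?_⟩
    have hnorm : ‖f x‖ ≤ √(‖f x‖ ^ 2 + ε ^ 2) :=
      Real.le_sqrt_of_sq_le (le_add_of_nonneg_right (sq_nonneg ε))
    rw [div_le_iff₀ (by positivity)]
    nlinarith
  have hζa : ζ a ≤ ‖f a‖ + ε := by
    simpa [abs_of_pos hε] using norm_add_le ((‖f a‖ : ℂ)) (ε * Complex.I)
  have hζb : ‖f b‖ ≤ ζ b := by simpa using Complex.re_le_norm ((‖f b‖ : ℂ) + ε * Complex.I)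
  linarith [hζ_lip.sub_le_mul_of_ae_hasDerivAt_le hab hζ_deriv]

section Flow

variable {X : Type*} [NormedAddCommGroup X] [InnerProductSpace ℝ X] {A : X → Set X}
  {u : ℝ → X} {L : ℝ≥0}

theorem IsMonotoneOperator.norm_flow_sub_le (hA : IsMonotoneOperator A)
    (hu : LipschitzOnWith L u (Ici 0))
    (hflow : ∀ᵐ x, 0 < x → ∃ w, HasDerivAt u w x ∧ -w ∈ A (u x))
    {s t : ℝ} (hs : 0 ≤ s) (hst : s ≤ t) {v : X} (hv : v ∈ A (u s)) :
    ‖u t - u s‖ ≤ ‖v‖ * (t - s) := by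
  have hlip : LipschitzOnWith (L + 0) (fun x => u x - u s) (Icc s t) :=
    (hu.mono fun x hx => hs.trans hx.1).sub (LipschitzWith.const _).lipschitzOnWith
  have hd : ∀ᵐ x, x ∈ Ioo s t →
      ∃ f', HasDerivAt (fun x => u x - u s) f' x ∧ ⟪u x - u s, f'⟫_ℝ ≤ ‖v‖ * ‖u x - u s‖ := by
    filter_upwards [hflow] with x hx hxst
    obtain ⟨w, hw, hwA⟩ := hx (hs.trans_lt hxst.1)
    refine ⟨w, hw.sub_const _, ?_⟩
    have hmono := hA _ _ _ _ hwA hv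
    have hcs := real_inner_le_norm (-v) (u x - u s)
    rw [inner_sub_left, inner_neg_left, real_inner_comm] at hmono
    rw [inner_neg_left, norm_neg] at hcs
    linarith
  simpa using hlip.norm_le_add_mul_of_ae_inner_deriv_le hst (norm_nonneg v) hd

theorem IsMonotoneOperator.norm_flow_increment_antitone (hA : IsMonotoneOperator A)
    (hu : LipschitzOnWith L u (Ici 0))
    (hflow : ∀ᵐ x, 0 < x → ∃ w, HasDerivAt u w x ∧ -w ∈ A (u x))
    {s t h : ℝ} (hs : 0 ≤ s) (hst : s ≤ t) (hh : 0 ≤ h) :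
    ‖u (t + h) - u t‖ ≤ ‖u (s + h) - u s‖ := by
  have hIcc : Icc s t ⊆ Ici 0 := fun x hx => hs.trans hx.1
  have hlip : LipschitzOnWith (L * 1 + L) (fun x => u (x + h) - u x) (Icc s t) :=
    ((hu.comp (IsometryEquiv.addRight h).isometry.lipschitz.lipschitzOnWith
      fun x hx => show 0 ≤ x + h by linarith [hs.trans hx.1]).sub
      (hu.mono hIcc))
  have hflow_shift : ∀ᵐ x, 0 < x + h → ∃ w, HasDerivAt u w (x + h) ∧ -w ∈ A (u (x + h)) :=
    (measurePreserving_add_right volume h).quasiMeasurePreserving.ae hflow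
  have hd : ∀ᵐ x, x ∈ Ioo s t → ∃ f', HasDerivAt (fun x => u (x + h) - u x) f' x ∧
      ⟪u (x + h) - u x, f'⟫_ℝ ≤ 0 * ‖u (x + h) - u x‖ := by
    filter_upwards [hflow, hflow_shift] with x hx hxh hxst
    obtain ⟨w₀, hw₀, hw₀A⟩ := hx (hs.trans_lt hxst.1)
    obtain ⟨w₁, hw₁, hw₁A⟩ := hxh (by linarith [hxst.1])
    refine ⟨w₁ - w₀, (hw₁.comp_add_const x h).sub hw₀, ?_⟩
    have hmono := hA _ _ _ _ hw₁A hw₀A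
    rw [neg_sub_neg, inner_sub_left] at hmono
    rw [zero_mul, inner_sub_right]
    linarith [real_inner_comm (u (x + h) - u x) w₀, real_inner_comm (u (x + h) - u x) w₁]
  simpa using hlip.norm_le_add_mul_of_ae_inner_deriv_le hst le_rfl hd

theorem IsMonotoneOperator.norm_flow_sub_le_mul_abs (hA : IsMonotoneOperator A)
    (hu : LipschitzOnWith L u (Ici 0))
    (hflow : ∀ᵐ x, 0 < x → ∃ w, HasDerivAt u w x ∧ -w ∈ A (u x))
    {s x y : ℝ} (hs : 0 ≤ s) (hx : s ≤ x) (hy : s ≤ y) {v : X} (hv : v ∈ A (u s)) :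
    ‖u y - u x‖ ≤ ‖v‖ * |y - x| := by
  wlog hxy : x ≤ y generalizing x y
  · rw [norm_sub_rev, abs_sub_comm]
    exact this hy hx (le_of_not_ge hxy)
  calc ‖u y - u x‖ = ‖u (x + (y - x)) - u x‖ := by rw [add_sub_cancel]
    _ ≤ ‖u (s + (y - x)) - u s‖ :=
      hA.norm_flow_increment_antitone hu hflow hs hx (sub_nonneg.2 hxy)
    _ ≤ ‖v‖ * (s + (y - x) - s) :=
      hA.norm_flow_sub_le hu hflow hs (by linarith) hv
    _ = ‖v‖ * |y - x| := by rw [add_sub_cancel_left, abs_of_nonneg (sub_nonneg.2 hxy)]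

theorem IsMonotoneOperator.norm_flow_deriv_le (hA : IsMonotoneOperator A)
    (hu : LipschitzOnWith L u (Ici 0))
    (hflow : ∀ᵐ x, 0 < x → ∃ w, HasDerivAt u w x ∧ -w ∈ A (u x))
    {s x : ℝ} (hs : 0 ≤ s) (hsx : s < x) {w : X} (hw : HasDerivAt u w x)
    {v : X} (hv : v ∈ A (u s)) : ‖w‖ ≤ ‖v‖ := by
  refine hw.le_of_lip' (norm_nonneg v) ?_
  filter_upwards [Ioi_mem_nhds hsx] with y hy
  simpa only [Real.norm_eq_abs] using
    hA.norm_flow_sub_le_mul_abs hu hflow hs hsx.le (le_of_lt hy) hv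

end Flow

theorem IsMaximalMonotoneOperator.mem_of_forall_inner_nonneg {X : Type*} [NormedAddCommGroup X]
    [InnerProductSpace ℝ X] {A : X → Set X} (hA : IsMaximalMonotoneOperator A) {x q : X}
    (h : ∀ y v, v ∈ A y → 0 ≤ ⟪q - v, x - y⟫_ℝ) : q ∈ A x := by
  set B : X → Set X := fun y => A y ∪ {z | y = x ∧ z = q}
  have hB : IsMonotoneOperator B := by
    rintro x₁ x₂ v₁ v₂ (h₁ | ⟨rfl, rfl⟩) (h₂ | ⟨rfl, rfl⟩)
    · exact hA.1 x₁ x₂ v₁ v₂ h₁ h₂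
    · simpa only [← neg_sub v₁, ← neg_sub x₁, inner_neg_neg] using h x₁ v₁ h₁
    · exact h x₂ v₂ h₂
    · simp
  have hq : q ∈ B x := Or.inr ⟨rfl, rfl⟩
  rwa [hA.2 B hB fun y => subset_union_left] at hq

section Hilbert

variable {X : Type*} [NormedAddCommGroup X] [InnerProductSpace ℝ X]

theorem exists_mem_forall_norm_sq_add_norm_sub_sq_le {C : Set X} (hne : C.Nonempty)
    (hC : IsComplete C) (hcv : Convex ℝ C) :
    ∃ q ∈ C, ∀ z ∈ C, ‖q‖ ^ 2 + ‖z - q‖ ^ 2 ≤ ‖z‖ ^ 2 := by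
  obtain ⟨q, hq, hmin⟩ := exists_norm_eq_iInf_of_complete_convex hne hC hcv 0
  refine ⟨q, hq, fun z hz => ?_⟩
  have hinner := (norm_eq_iInf_iff_real_inner_le_zero hcv hq).1 hmin z hz
  have hexpand : ‖z‖ ^ 2 = ‖q‖ ^ 2 + 2 * ⟪q, z - q⟫_ℝ + ‖z - q‖ ^ 2 := by
    rw [← norm_add_sq_real, add_sub_cancel]
  rw [zero_sub, inner_neg_left] at hinner
  linarith

theorem exists_forall_mem_norm_le_of_antitone_convex [CompleteSpace X] {C : ℕ → Set X}
    (hcl : ∀ n, IsClosed (C n)) (hcv : ∀ n, Convex ℝ (C n)) (hanti : Antitone C) {M : ℝ}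
    (hM : ∀ n, ∃ z ∈ C n, ‖z‖ ≤ M) :
    ∃ q, (∀ n, q ∈ C n) ∧ ‖q‖ ≤ M := by
  have hproj n := exists_mem_forall_norm_sq_add_norm_sub_sq_le ((hM n).imp fun _ => And.left)
    (hcl n).isComplete (hcv n)
  choose q hqC hq using hproj
  have hqM n : ‖q n‖ ≤ M := by
    obtain ⟨z, hz, hzM⟩ := hM n
    nlinarith [hq n z hz, norm_nonneg (q n), norm_nonneg z, sq_nonneg ‖z - q n‖]
  have hsub {m n} (hmn : m ≤ n) : ‖q n - q m‖ ^ 2 ≤ ‖q n‖ ^ 2 - ‖q m‖ ^ 2 := by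
    linarith [hq m (q n) (hanti hmn (hqC n))]
  have hmono : Monotone fun n => ‖q n‖ ^ 2 := fun m n hmn => by nlinarith [hsub hmn]
  have hbdd : BddAbove (range fun n => ‖q n‖ ^ 2) :=
    ⟨M ^ 2, by rintro _ ⟨n, rfl⟩; exact pow_le_pow_left₀ (norm_nonneg _) (hqM n) 2⟩
  obtain ⟨r, hr_lim, hr_le⟩ : ∃ r, Tendsto (fun n => ‖q n‖ ^ 2) atTop (𝓝 r) ∧
      ∀ n, ‖q n‖ ^ 2 ≤ r :=
    ⟨_, tendsto_atTop_ciSup hmono hbdd, fun n => le_ciSup hbdd n⟩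
  have hcauchy : CauchySeq q := by
    refine cauchySeq_of_le_tendsto_0 (fun m => 2 * √(r - ‖q m‖ ^ 2)) (fun n n' m hn hn' => ?_) ?_
    · have hdist {n} (hn : m ≤ n) : ‖q n - q m‖ ≤ √(r - ‖q m‖ ^ 2) :=
        Real.le_sqrt_of_sq_le ((hsub hn).trans (by linarith [hr_le n]))
      rw [dist_eq_norm, ← sub_sub_sub_cancel_right _ _ (q m), two_mul]
      exact (norm_sub_le _ _).trans (add_le_add (hdist hn) (hdist hn'))
    · have hlim : Tendsto (fun m => r - ‖q m‖ ^ 2) atTop (𝓝 0) := by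
        simpa using hr_lim.const_sub r
      simpa using ((Real.continuous_sqrt.tendsto 0).comp hlim).const_mul 2
  obtain ⟨q₀, hq₀⟩ := cauchySeq_tendsto_of_complete hcauchy
  refine ⟨q₀, fun m => (hcl m).mem_of_tendsto hq₀ ?_, le_of_tendsto hq₀.norm (.of_forall hqM)⟩
  filter_upwards [eventually_ge_atTop m] with n hn using hanti hn (hqC n)

end Hilbert

theorem IsMaximalMonotoneOperator.exists_mem_norm_le_of_tendsto {X : Type*}
    [NormedAddCommGroup X] [InnerProductSpace ℝ X] [CompleteSpace X] {A : X → Set X}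
    (hA : IsMaximalMonotoneOperator A) {x v : ℕ → X} {x₀ : X} {M : ℝ}
    (hx : Tendsto x atTop (𝓝 x₀)) (hv : ∀ n, v n ∈ A (x n)) (hvM : ∀ n, ‖v n‖ ≤ M) :
    ∃ q ∈ A x₀, ‖q‖ ≤ M := by
  -- A common point of the closed convex hulls of the tails of `v` plays the role of a weak
  -- cluster point of `v`.
  set C : ℕ → Set X := fun n => closure (convexHull ℝ (v '' Ici n))
  obtain ⟨q, hqC, hqM⟩ := exists_forall_mem_norm_le_of_antitone_convex (C := C)
    (fun n => isClosed_closure) (fun n => (convex_convexHull ℝ _).closure)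
    (fun m n hmn => closure_mono (convexHull_mono (image_mono (Ici_subset_Ici.2 hmn))))
    (fun n => ⟨v n, subset_closure (subset_convexHull ℝ _ ⟨n, self_mem_Ici, rfl⟩), hvM n⟩)
  refine ⟨q, hA.mem_of_forall_inner_nonneg fun y v' hv' => ?_, hqM⟩
  refine le_of_forall_pos_le_add fun ε hε => ?_
  have hsmall : ∀ᶠ n in atTop, (M + ‖v'‖) * ‖x₀ - x n‖ ≤ ε := by
    have hlim : Tendsto (fun n => (M + ‖v'‖) * ‖x₀ - x n‖) atTop (𝓝 0) := by
      simpa using ((hx.const_sub x₀).norm.const_mul (M + ‖v'‖))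
    exact hlim.eventually (ge_mem_nhds hε)
  obtain ⟨N, hN⟩ := hsmall.exists_forall_of_atTop
  set H : Set X := {z | ⟪x₀ - y, v'⟫_ℝ - ε ≤ ⟪x₀ - y, z⟫_ℝ}
  have hH : IsClosed H ∧ Convex ℝ H :=
    ⟨isClosed_le continuous_const (continuous_const.inner continuous_id),
      convex_halfSpace_ge
        ⟨fun _ _ => inner_add_right _ _ _, fun _ _ => real_inner_smul_right _ _ _⟩ _⟩
  have hvH : v '' Ici N ⊆ H := by
    rintro _ ⟨n, hn, rfl⟩
    have hmono := hA.1 _ _ _ _ (hv n) hv'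
    have hcs := abs_real_inner_le_norm (v n - v') (x₀ - x n)
    have hnorm : ‖v n - v'‖ ≤ M + ‖v'‖ := (norm_sub_le _ _).trans (by linarith [hvM n])
    have hsplit : ⟪v n - v', x₀ - y⟫_ℝ = ⟪v n - v', x n - y⟫_ℝ + ⟪v n - v', x₀ - x n⟫_ℝ := by
      rw [← inner_add_right, sub_add_sub_cancel']
    show ⟪x₀ - y, v'⟫_ℝ - ε ≤ ⟪x₀ - y, v n⟫_ℝ
    linarith [abs_le.1 hcs, hN n hn, mul_le_mul_of_nonneg_right hnorm (norm_nonneg (x₀ - x n)),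
      inner_sub_left (𝕜 := ℝ) (v n) v' (x₀ - y), real_inner_comm (x₀ - y) v',
      real_inner_comm (x₀ - y) (v n)]
  have hqH : q ∈ H := closure_minimal (convexHull_min hvH hH.2) hH.1 (hqC N)
  change ⟪x₀ - y, v'⟫_ℝ - ε ≤ ⟪x₀ - y, q⟫_ℝ at hqH
  rw [inner_sub_left, real_inner_comm _ v', real_inner_comm _ q]
  linarith

theorem exists_seq_tendsto_of_ae_mem_Ioo {p : ℝ → Prop} {s t : ℝ} (hst : s < t)
    (hp : ∀ᵐ x, x ∈ Ioo s t → p x) :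
    ∃ τ : ℕ → ℝ, Tendsto τ atTop (𝓝 t) ∧ ∀ n, τ n ∈ Ioo s t ∧ p (τ n) := by
  suffices h : ∃ᶠ x in 𝓝[<] t, x ∈ Ioo s t ∧ p x by
    obtain ⟨τ, hτ, hτp⟩ := exists_seq_forall_of_frequently h
    exact ⟨τ, tendsto_nhds_of_tendsto_nhdsWithin hτ, hτp⟩
  intro hnot
  obtain ⟨l, hl, hlt⟩ := mem_nhdsLT_iff_exists_Ioo_subset.1 hnot
  have hsub : Ioo (max l s) t ⊆ {x | ¬(x ∈ Ioo s t → p x)} := by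
    intro x hx hpx
    have hxs : x ∈ Ioo s t := ⟨(le_max_right _ _).trans_lt hx.1, hx.2⟩
    exact hlt ⟨(le_max_left _ _).trans_lt hx.1, hx.2⟩ ⟨hxs, hpx hxs⟩
  have hnull := measure_mono_null hsub (ae_iff.1 hp)
  rw [Real.volume_Ioo, ENNReal.ofReal_eq_zero, sub_nonpos] at hnull
  exact (max_lt hl hst).not_ge hnull

/-- Along a Lipschitz solution `u` of `-u'(t) ∈ A(u(t))` for a maximal monotone
operator `A`, the function `t ↦ inf {‖v‖ : v ∈ A (u t)}` is non-increasing on `[0,∞)`. -/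
theorem maximal_monotone_flow_min_section_norm_antitone
    {X : Type*} [NormedAddCommGroup X] [InnerProductSpace ℝ X] [CompleteSpace X]
    (A : X → Set X) (hA : IsMaximalMonotoneOperator A)
    (u : ℝ → X)
    (hu_lip : ∃ L : NNReal, LipschitzOnWith L u (Set.Ici (0 : ℝ)))
    (hu_dom : ∀ t : ℝ, 0 ≤ t → (A (u t)).Nonempty)
    (hu_flow : ∀ᵐ t ∂(MeasureTheory.volume.restrict (Set.Ioi (0 : ℝ))),
      ∃ w : X, HasDerivAt u w t ∧ -w ∈ A (u t)) :
    AntitoneOn (fun t => sInf {r : ℝ | ∃ v ∈ A (u t), ‖v‖ = r}) (Set.Ici (0 : ℝ)) := by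
  intro s hs t ht hst
  obtain ⟨L, hu⟩ := hu_lip
  have hflow : ∀ᵐ x, 0 < x → ∃ w, HasDerivAt u w x ∧ -w ∈ A (u x) :=
    (ae_restrict_iff' measurableSet_Ioi).1 hu_flow
  rcases hst.eq_or_lt with rfl | hst
  · rfl
  obtain ⟨τ, hτt, hτ⟩ := exists_seq_tendsto_of_ae_mem_Ioo hst
    (hflow.mono fun x hx hxst => hx ((mem_Ici.1 hs).trans_lt hxst.1))
  choose w hw hwA using fun n => (hτ n).2
  have hwm n : ‖-w n‖ ≤ sInf {r : ℝ | ∃ v ∈ A (u s), ‖v‖ = r} := by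
    obtain ⟨v, hv⟩ := hu_dom s hs
    refine le_csInf ⟨‖v‖, v, hv, rfl⟩ ?_
    rintro _ ⟨v, hv, rfl⟩
    rw [norm_neg]
    exact hA.1.norm_flow_deriv_le hu hflow hs (hτ n).1.1 (hw n) hv
  have hut : Tendsto (fun n => u (τ n)) atTop (𝓝 (u t)) :=
    (hu.continuousOn t ht).tendsto.comp (tendsto_nhdsWithin_iff.2
      ⟨hτt, .of_forall fun n => (mem_Ici.1 hs).trans (hτ n).1.1.le⟩)
  obtain ⟨q, hq, hqm⟩ := hA.exists_mem_norm_le_of_tendsto hut hwA hwm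
  have hbdd : BddBelow {r : ℝ | ∃ v ∈ A (u t), ‖v‖ = r} :=
    ⟨0, by rintro _ ⟨v, -, rfl⟩; positivity⟩
  exact (csInf_le hbdd ⟨q, hq, rfl⟩).trans hqm
end

section
/- Let Y and Z be real Hilbert spaces and K : Y × Z → ℝ a function such that K(·,z) is convex for every z ∈ Z and K(y,·) is concave for every y ∈ Y. Let T be the associated operator on Y × Z. Then T is monotone: if (y₁*, z₁*) ∈ T(y₁, z₁) and (y₂*, z₂*) ∈ T(y₂, z₂), then ⟨y₁* - y₂*, y₁ - y₂⟩ + ⟨z₁* - z₂*, z₁ - z₂⟩ ≥ 0. -/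
open scoped InnerProductSpace

/-- The Arrow–Hurwicz operator `T` associated to a convex–concave function `K`:
`(y*, z*) ∈ T (y, z)` iff `y*` is a subgradient of `K(·,z)` at `y` and
`z*` is a subgradient of `-K(y,·)` at `z`. -/
def SaddleOperator {Y Z : Type*} [NormedAddCommGroup Y] [InnerProductSpace ℝ Y]
    [NormedAddCommGroup Z] [InnerProductSpace ℝ Z]
    (K : Y → Z → ℝ) (p : Y × Z) : Set (Y × Z) :=
  {q : Y × Z |
    (∀ w : Y, K p.1 p.2 + ⟪q.1, w - p.1⟫_ℝ ≤ K w p.2) ∧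
    (∀ w : Z, -K p.1 p.2 + ⟪q.2, w - p.2⟫_ℝ ≤ -K p.1 w)}

/-- The operator `T` associated to a convex–concave saddle function `K` is monotone. -/
theorem saddleOperator_monotone
    {Y Z : Type*} [NormedAddCommGroup Y] [InnerProductSpace ℝ Y] [CompleteSpace Y]
    [NormedAddCommGroup Z] [InnerProductSpace ℝ Z] [CompleteSpace Z]
    (K : Y → Z → ℝ)
    (hconv : ∀ z : Z, ConvexOn ℝ Set.univ (fun y => K y z))
    (hconc : ∀ y : Y, ConcaveOn ℝ Set.univ (fun z => K y z))
    (p₁ p₂ q₁ q₂ : Y × Z)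
    (hq₁ : q₁ ∈ SaddleOperator K p₁) (hq₂ : q₂ ∈ SaddleOperator K p₂) :
    0 ≤ ⟪q₁.1 - q₂.1, p₁.1 - p₂.1⟫_ℝ + ⟪q₁.2 - q₂.2, p₁.2 - p₂.2⟫_ℝ := by
  have h1 := hq₁.1 p₂.1
  have h2 := hq₁.2 p₂.2
  have h3 := hq₂.1 p₁.1
  have h4 := hq₂.2 p₁.2
  have key : ⟪q₁.1, p₂.1 - p₁.1⟫_ℝ + ⟪q₁.2, p₂.2 - p₁.2⟫_ℝ
      + ⟪q₂.1, p₁.1 - p₂.1⟫_ℝ + ⟪q₂.2, p₁.2 - p₂.2⟫_ℝ ≤ 0 := by linarith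
  have e1 : p₂.1 - p₁.1 = -(p₁.1 - p₂.1) := by abel
  have e2 : p₂.2 - p₁.2 = -(p₁.2 - p₂.2) := by abel
  rw [e1, e2, inner_neg_right, inner_neg_right] at key
  rw [inner_sub_left, inner_sub_left]
  linarith
end

section
/- Let Y and Z be real Hilbert spaces and K : Y × Z → ℝ a function such that K(·,z) is convex and lower semicontinuous for every z ∈ Z, and K(y,·) is concave and upper semicontinuous for every y ∈ Y. Then the associated operator T on the Hilbert space Y × Z is maximal monotone. -/
open scoped InnerProductSpace
/-- A multivalued operator on the Hilbert space `Y × Z` (with the product inner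
product) is monotone if `⟪q₁ - q₂, p₁ - p₂⟫ ≥ 0` whenever `q₁ ∈ A p₁`, `q₂ ∈ A p₂`. -/
def IsMonotoneOperatorProd {Y Z : Type*} [NormedAddCommGroup Y] [InnerProductSpace ℝ Y]
    [NormedAddCommGroup Z] [InnerProductSpace ℝ Z]
    (A : Y × Z → Set (Y × Z)) : Prop :=
  ∀ p₁ p₂ q₁ q₂, q₁ ∈ A p₁ → q₂ ∈ A p₂ →
    0 ≤ ⟪q₁.1 - q₂.1, p₁.1 - p₂.1⟫_ℝ + ⟪q₁.2 - q₂.2, p₁.2 - p₂.2⟫_ℝ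

/-- A monotone operator on `Y × Z` is maximal monotone if its graph is not properly
contained in the graph of any other monotone operator. -/
def IsMaximalMonotoneOperatorProd {Y Z : Type*}
    [NormedAddCommGroup Y] [InnerProductSpace ℝ Y]
    [NormedAddCommGroup Z] [InnerProductSpace ℝ Z]
    (A : Y × Z → Set (Y × Z)) : Prop :=
  IsMonotoneOperatorProd A ∧
    ∀ B : Y × Z → Set (Y × Z), IsMonotoneOperatorProd B → (∀ p, A p ⊆ B p) → B = A

/-!
Monotonicity of `T` is the sum of the four subgradient inequalities. For maximality we use
Minty's criterion: given `(u, v)`, the function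
`L y z = K y z - ‖z - v‖² / 2 + ‖y - u‖² / 2` is strongly convex in `y` and strongly concave
in `z`, and a saddle point `(y₀, z₀)` of `L` satisfies `(u - y₀, v - z₀) ∈ T (y₀, z₀)`.

A saddle point exists without any compactness: a strongly convex lower semicontinuous function
on a Banach space has a minimizer (minimizing sequences are Cauchy by the midpoint inequality),
so we may take the maximizer `zc y` of `L y ·`, minimize the strongly convex marginal
`y ↦ L y (zc y)` at `y₀`, and check that `(y₀, zc y₀)` is a saddle point.
-/

open Set Filter Topology

section StrongConvex

variable {E : Type*} [NormedAddCommGroup E] [NormedSpace ℝ E] {f : E → ℝ} {m : ℝ}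

lemma ConvexOn.exists_sub_mul_norm_sub_le (hf : ConvexOn ℝ univ f) {x₀ : E}
    (hx₀ : LowerSemicontinuousAt f x₀) : ∃ c, ∀ y, f x₀ - 1 - c * ‖y - x₀‖ ≤ f y := by
  obtain ⟨ε, hε, hball⟩ := Metric.eventually_nhds_iff.1 (hx₀ (f x₀ - 1) (by linarith))
  refine ⟨2 / ε, fun y => ?_⟩
  set d := ‖y - x₀‖
  rcases lt_or_ge d ε with hd | hd
  · have : f x₀ - 1 < f y := hball (by rwa [dist_eq_norm])
    have : 0 ≤ 2 / ε * d := by positivity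
    linarith
  -- Move from `x₀` towards `y` until the distance `ε / 2`, where `f > f x₀ - 1`.
  set t := ε / (2 * d)
  have hd0 : 0 < d := hε.trans_le hd
  have ht0 : 0 < t := by positivity
  have ht1 : t ≤ 1 := by rw [div_le_one (by positivity)]; linarith
  have hnear : f x₀ - 1 < f ((1 - t) • x₀ + t • y) := by
    refine hball ?_
    have : (1 - t) • x₀ + t • y - x₀ = t • (y - x₀) := by module
    rw [dist_eq_norm, this, norm_smul, Real.norm_of_nonneg ht0.le]
    simp only [t]; field_simp; linarith
  have hconv := hf.2 (mem_univ x₀) (mem_univ y) (by linarith : 0 ≤ 1 - t) ht0.le (by ring)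
  simp only [smul_eq_mul] at hconv
  have : t * (f x₀ - 2 / ε * d) ≤ t * f y := by
    have : t * (2 / ε * d) = 1 := by simp only [t]; field_simp
    nlinarith
  have := le_of_mul_le_mul_left this ht0
  linarith

lemma StrongConvexOn.midpoint_add_le (hf : StrongConvexOn univ m f) (x y : E) :
    f ((1 / 2 : ℝ) • x + (1 / 2 : ℝ) • y) + m / 8 * ‖x - y‖ ^ 2 ≤ (f x + f y) / 2 := by
  have := hf.2 (mem_univ x) (mem_univ y) (by norm_num : (0 : ℝ) ≤ 1 / 2)
    (by norm_num : (0 : ℝ) ≤ 1 / 2) (by norm_num)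
  simp only [smul_eq_mul] at this
  linarith

lemma StrongConvexOn.bddBelow_range (hf : StrongConvexOn univ m f) (hm : 0 < m)
    (hlsc : LowerSemicontinuous f) : BddBelow (range f) := by
  obtain ⟨c, hc⟩ :=
    (UniformConvexOn.convexOn hf fun _ => by positivity).exists_sub_mul_norm_sub_le (hlsc 0)
  refine ⟨f 0 - 2 - c ^ 2 / m, forall_mem_range.2 fun y => ?_⟩
  have hmid := hf.midpoint_add_le 0 y
  have hlow := hc ((1 / 2 : ℝ) • (0 : E) + (1 / 2 : ℝ) • y)
  simp only [smul_zero, zero_add, sub_zero, zero_sub, norm_neg, norm_smul] at hmid hlow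
  norm_num at hlow
  have : 0 ≤ (m * ‖y‖ / 2 - c) ^ 2 / m := by positivity
  have : (m * ‖y‖ / 2 - c) ^ 2 / m = m / 4 * ‖y‖ ^ 2 - c * ‖y‖ + c ^ 2 / m := by
    field_simp; ring
  linarith

lemma StrongConvexOn.add_mul_norm_sub_sq_le (hf : StrongConvexOn univ m f) {x₀ : E}
    (hx₀ : ∀ x, f x₀ ≤ f x) (x : E) : f x₀ + m / 4 * ‖x - x₀‖ ^ 2 ≤ f x := by
  have := hf.midpoint_add_le x₀ x
  have := hx₀ ((1 / 2 : ℝ) • x₀ + (1 / 2 : ℝ) • x)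
  rw [norm_sub_rev]
  linarith

lemma StrongConvexOn.exists_forall_le [CompleteSpace E] (hf : StrongConvexOn univ m f)
    (hm : 0 < m) (hlsc : LowerSemicontinuous f) : ∃ x₀, ∀ x, f x₀ ≤ f x := by
  have hbdd := hf.bddBelow_range hm hlsc
  obtain ⟨v, hv_anti, hv_lim, hv_mem⟩ := exists_seq_tendsto_sInf (range_nonempty f) hbdd
  set μ := sInf (range f)
  have hμ : ∀ x, μ ≤ f x := fun x => csInf_le hbdd ⟨x, rfl⟩
  choose x hx using hv_mem
  have hdist : ∀ j k N, N ≤ j → N ≤ k → dist (x j) (x k) ≤ √(8 / m * (v N - μ)) := by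
    intro j k N hj hk
    refine Real.le_sqrt_of_sq_le ?_
    have hmid := hf.midpoint_add_le (x j) (x k)
    have := hμ ((1 / 2 : ℝ) • x j + (1 / 2 : ℝ) • x k)
    have hj' := hv_anti hj
    have hk' := hv_anti hk
    rw [← hx j] at hj'
    rw [← hx k] at hk'
    rw [dist_eq_norm, div_mul_eq_mul_div, le_div_iff₀ hm]
    linarith
  have hlim : Tendsto (fun N => √(8 / m * (v N - μ))) atTop (𝓝 0) := by
    simpa using ((hv_lim.sub_const μ).const_mul (8 / m)).sqrt
  obtain ⟨x₀, hx₀⟩ := cauchySeq_tendsto_of_complete (cauchySeq_of_le_tendsto_0 _ hdist hlim)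
  refine ⟨x₀, fun y => le_trans ?_ (hμ y)⟩
  refine le_of_forall_lt_imp_le_of_dense fun c hc => ge_of_tendsto hv_lim ?_
  filter_upwards [hx₀.eventually (hlsc x₀ c hc)] with n hn
  exact (hx n ▸ hn).le

lemma StrongConvexOn.of_forall_le_of_exists_eq {ι : Type*} {F : ι → E → ℝ} {s : Set E}
    (hF : ∀ i, StrongConvexOn s m (F i)) (hle : ∀ i x, F i x ≤ f x)
    (heq : ∀ x, ∃ i, f x = F i x) : StrongConvexOn s m f := by
  obtain ⟨i₀, -⟩ := heq 0
  refine ⟨(hF i₀).1, fun x hx y hy a b ha hb hab => ?_⟩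
  obtain ⟨i, hi⟩ := heq (a • x + b • y)
  rw [hi]
  refine ((hF i).2 hx hy ha hb hab).trans ?_
  gcongr
  · exact hle i x
  · exact hle i y

end StrongConvex

lemma LowerSemicontinuous.of_forall_le_of_exists_eq {α β ι : Type*} [TopologicalSpace α]
    [Preorder β] {F : ι → α → β} {f : α → β} (hF : ∀ i, LowerSemicontinuous (F i))
    (hle : ∀ i x, F i x ≤ f x) (heq : ∀ x, ∃ i, f x = F i x) : LowerSemicontinuous f := by
  intro x c hc
  obtain ⟨i, hi⟩ := heq x
  have hc' : c < F i x := hi ▸ hc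
  filter_upwards [hF i x c hc'] with y hy
  exact hy.trans_le (hle i y)

section Saddle

variable {Y Z : Type*} [NormedAddCommGroup Y] [NormedSpace ℝ Y] [NormedAddCommGroup Z]
  {L : Y → Z → ℝ} {m : ℝ}

/-- Along `y₀ + t (w - y₀)` the maximizers `zc` tend to `zc y₀` as `t → 0⁺`, by the quadratic
decay, while `L w` stays above the minimal value of the marginal; upper semicontinuity of `L w`
passes this to the limit. -/
lemma le_of_forall_marginal_le (hm : 0 < m) (hconv : ∀ z, ConvexOn ℝ univ (L · z))
    (husc : ∀ y, UpperSemicontinuous (L y)) {zc : Y → Z}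
    (hzc : ∀ y z, L y z + m / 4 * ‖z - zc y‖ ^ 2 ≤ L y (zc y)) {y₀ : Y}
    (hy₀ : ∀ y, L y₀ (zc y₀) ≤ L y (zc y)) (w : Y) : L y₀ (zc y₀) ≤ L w (zc y₀) := by
  set z₀ := zc y₀
  set zt : ℝ → Z := fun t => zc ((1 - t) • y₀ + t • w)
  set D := L w (zc w) - L y₀ z₀
  have hstep : ∀ t ∈ Ioo (0 : ℝ) 1, L y₀ z₀ ≤ (1 - t) * L y₀ (zt t) + t * L w (zt t) := by
    intro t ht
    exact (hy₀ _).trans ((hconv (zt t)).2 (mem_univ _) (mem_univ _)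
      (by linarith [ht.2] : 0 ≤ 1 - t) ht.1.le (by ring))
  have hval : ∀ t ∈ Ioo (0 : ℝ) 1, L y₀ z₀ ≤ L w (zt t) := by
    intro t ht
    have h1 := hzc y₀ (zt t)
    have h2 := hstep t ht
    have : 0 ≤ m / 4 * ‖zt t - z₀‖ ^ 2 := by positivity
    have : (1 - t) * L y₀ (zt t) ≤ (1 - t) * L y₀ z₀ := by gcongr; linarith [ht.2]; linarith
    refine le_of_mul_le_mul_left ?_ ht.1
    linarith
  have hclose : ∀ t ∈ Ioo (0 : ℝ) (1 / 2), ‖zt t - z₀‖ ^ 2 ≤ 8 * D / m * t := by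
    intro t ht
    have h1 := hzc y₀ (zt t)
    have h2 := hzc w (zt t)
    have h3 := hstep t ⟨ht.1, by linarith [ht.2]⟩
    have hq : 0 ≤ m / 4 * ‖zt t - z₀‖ ^ 2 := by positivity
    have hq' : 0 ≤ m / 4 * ‖zt t - zc w‖ ^ 2 := by positivity
    have : (1 - t) * L y₀ (zt t) ≤ (1 - t) * (L y₀ z₀ - m / 4 * ‖zt t - z₀‖ ^ 2) := by
      gcongr; linarith [ht.2]; linarith
    have : t * L w (zt t) ≤ t * L w (zc w) := by
      gcongr; linarith [ht.1]; linarith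
    rw [div_mul_eq_mul_div, le_div_iff₀ hm]
    nlinarith [mul_le_mul_of_nonneg_right ht.2.le hq]
  have htend : Tendsto zt (𝓝[>] 0) (𝓝 z₀) := by
    rw [tendsto_iff_norm_sub_tendsto_zero]
    refine squeeze_zero' (Eventually.of_forall fun _ => norm_nonneg _) ?_
      (g := fun t => √(8 * D / m * t)) ?_
    · filter_upwards [Ioo_mem_nhdsGT (by norm_num : (0 : ℝ) < 1 / 2)] with t ht
      exact Real.le_sqrt_of_sq_le (hclose t ht)
    · have : Continuous fun t : ℝ => √(8 * D / m * t) := by fun_prop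
      simpa using this.tendsto' 0 0 (by simp) |>.mono_left nhdsWithin_le_nhds
  refine le_of_forall_gt fun c hc => ?_
  obtain ⟨t, hlt, hle⟩ := ((htend.eventually (husc w z₀ c hc)).and
    (Ioo_mem_nhdsGT one_pos)).exists
  exact (hval t hle).trans_lt hlt

theorem exists_saddlePoint [NormedSpace ℝ Z] [CompleteSpace Y] [CompleteSpace Z] (hm : 0 < m)
    (hconv : ∀ z, StrongConvexOn univ m (L · z)) (hlsc : ∀ z, LowerSemicontinuous (L · z))
    (hconc : ∀ y, StrongConcaveOn univ m (L y)) (husc : ∀ y, UpperSemicontinuous (L y)) :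
    ∃ y₀ z₀, (∀ z, L y₀ z ≤ L y₀ z₀) ∧ ∀ y, L y₀ z₀ ≤ L y z₀ := by
  have hmax : ∀ y, ∃ z₀, ∀ z, L y z + m / 4 * ‖z - z₀‖ ^ 2 ≤ L y z₀ := by
    intro y
    have hneg : StrongConvexOn univ m (-L y) := UniformConcaveOn.neg (hconc y)
    obtain ⟨z₀, hz₀⟩ := hneg.exists_forall_le hm
      (continuous_neg.comp_upperSemicontinuous_antitone (husc y) fun _ _ => neg_le_neg)
    refine ⟨z₀, fun z => ?_⟩
    have := hneg.add_mul_norm_sub_sq_le hz₀ z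
    simp only [Pi.neg_apply] at this
    linarith
  choose zc hzc using hmax
  have hle : ∀ z y, L y z ≤ L y (zc y) := fun z y =>
    le_of_add_le_of_nonneg_left (hzc y z) (by positivity)
  have hattained : ∀ y, ∃ z, L y (zc y) = L y z := fun y => ⟨zc y, rfl⟩
  obtain ⟨y₀, hy₀⟩ :=
    (StrongConvexOn.of_forall_le_of_exists_eq hconv hle hattained).exists_forall_le hm
      (LowerSemicontinuous.of_forall_le_of_exists_eq hlsc hle hattained)
  exact ⟨y₀, zc y₀, fun z => hle z y₀, le_of_forall_marginal_le hm
    (fun z => UniformConvexOn.convexOn (hconv z) fun _ => by positivity) husc hzc hy₀⟩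

end Saddle

section InnerProductSpace

variable {E : Type*} [NormedAddCommGroup E] [InnerProductSpace ℝ E] {f : E → ℝ}

lemma ConvexOn.strongConvexOn_add_norm_sub_sq {s : Set E} (hf : ConvexOn ℝ s f) (u : E) :
    StrongConvexOn s 1 fun x => f x + ‖x - u‖ ^ 2 / 2 := by
  rw [strongConvexOn_iff_convex]
  have : (fun x => f x + ‖x - u‖ ^ 2 / 2 - 1 / 2 * ‖x‖ ^ 2) =
      (f - ⇑(innerₛₗ ℝ u)) + fun _ => ‖u‖ ^ 2 / 2 := by
    ext x
    simp only [Pi.add_apply, Pi.sub_apply, innerₛₗ_apply_apply, norm_sub_sq_real, real_inner_comm]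
    ring
  rw [this]
  exact (hf.sub ((innerₛₗ ℝ u).concaveOn hf.1)).add_const _

lemma ConvexOn.add_inner_sub_le_of_forall_le (hf : ConvexOn ℝ univ f) {x u : E}
    (hx : ∀ y, f x + ‖x - u‖ ^ 2 / 2 ≤ f y + ‖y - u‖ ^ 2 / 2) (w : E) :
    f x + ⟪u - x, w - x⟫_ℝ ≤ f w := by
  have key : ∀ t ∈ Ioo (0 : ℝ) 1, f x + ⟪u - x, w - x⟫_ℝ ≤ f w + t / 2 * ‖w - x‖ ^ 2 := by
    intro t ht
    have hmin := hx ((1 - t) • x + t • w)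
    have hconv := hf.2 (mem_univ x) (mem_univ w) (by linarith [ht.2] : 0 ≤ 1 - t) ht.1.le
      (by ring)
    have hsq : ‖(1 - t) • x + t • w - u‖ ^ 2 =
        ‖x - u‖ ^ 2 + 2 * t * ⟪x - u, w - x⟫_ℝ + t ^ 2 * ‖w - x‖ ^ 2 := by
      rw [show (1 - t) • x + t • w - u = (x - u) + t • (w - x) by module, norm_add_sq_real,
        norm_smul, real_inner_smul_right, Real.norm_of_nonneg ht.1.le]
      ring
    have hin : ⟪u - x, w - x⟫_ℝ = -⟪x - u, w - x⟫_ℝ := by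
      rw [← inner_neg_left, neg_sub]
    simp only [smul_eq_mul] at hconv
    rw [hsq] at hmin
    refine le_of_mul_le_mul_left ?_ ht.1
    rw [hin]
    linarith
  have hlim : Tendsto (fun t : ℝ => f w + t / 2 * ‖w - x‖ ^ 2) (𝓝[>] 0) (𝓝 (f w)) :=
    ((by fun_prop : Continuous fun t : ℝ => f w + t / 2 * ‖w - x‖ ^ 2).tendsto' 0 _
      (by simp)).mono_left nhdsWithin_le_nhds
  exact ge_of_tendsto hlim (eventually_of_mem (Ioo_mem_nhdsGT one_pos) key)

end InnerProductSpace

section SaddleOperator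

variable {Y Z : Type*} [NormedAddCommGroup Y] [InnerProductSpace ℝ Y]
  [NormedAddCommGroup Z] [InnerProductSpace ℝ Z]

lemma isMonotoneOperatorProd_saddleOperator (K : Y → Z → ℝ) :
    IsMonotoneOperatorProd (SaddleOperator K) := by
  rintro ⟨y₁, z₁⟩ ⟨y₂, z₂⟩ q₁ q₂ ⟨hy₁, hz₁⟩ ⟨hy₂, hz₂⟩
  have h₁ := hy₁ y₂
  have h₂ := hy₂ y₁
  have h₃ := hz₁ z₂
  have h₄ := hz₂ z₁
  simp only [inner_sub_left, inner_sub_right] at *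
  linarith

lemma IsMonotoneOperatorProd.isMaximalMonotoneOperatorProd {A : Y × Z → Set (Y × Z)}
    (hA : IsMonotoneOperatorProd A) (hsurj : ∀ u, ∃ p, u - p ∈ A p) :
    IsMaximalMonotoneOperatorProd A := by
  refine ⟨hA, fun B hB hAB => funext fun p => (Set.Subset.antisymm ?_ (hAB p))⟩
  intro q hq
  obtain ⟨p', hp'⟩ := hsurj (p + q)
  have hmono := hB p p' q (p + q - p') hq (hAB p' hp')
  rw [← Prod.fst_sub, ← Prod.snd_sub, ← Prod.fst_sub, ← Prod.snd_sub,
    show q - (p + q - p') = -(p - p') by abel] at hmono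
  simp only [Prod.fst_neg, Prod.snd_neg, inner_neg_left, real_inner_self_eq_norm_sq] at hmono
  have h₁ : ‖(p - p').1‖ ^ 2 = 0 := by
    linarith [sq_nonneg ‖(p - p').1‖, sq_nonneg ‖(p - p').2‖]
  have h₂ : ‖(p - p').2‖ ^ 2 = 0 := by
    linarith [sq_nonneg ‖(p - p').1‖, sq_nonneg ‖(p - p').2‖]
  have hp : p = p' := sub_eq_zero.1 (Prod.ext (by simpa using h₁) (by simpa using h₂))
  subst hp
  simpa using hp'

lemma exists_sub_mem_saddleOperator [CompleteSpace Y] [CompleteSpace Z] {K : Y → Z → ℝ}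
    (hconv : ∀ z, ConvexOn ℝ univ (K · z)) (hlsc : ∀ z, LowerSemicontinuous (K · z))
    (hconc : ∀ y, ConcaveOn ℝ univ (K y)) (husc : ∀ y, UpperSemicontinuous (K y))
    (u : Y × Z) : ∃ p, u - p ∈ SaddleOperator K p := by
  set L : Y → Z → ℝ := fun y z => K y z - ‖z - u.2‖ ^ 2 / 2 + ‖y - u.1‖ ^ 2 / 2
  obtain ⟨y₀, z₀, hz₀, hy₀⟩ := exists_saddlePoint (L := L) one_pos
    (fun z => ((hconv z).add_const _).strongConvexOn_add_norm_sub_sq u.1)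
    (fun z => ((hlsc z).add continuous_const.lowerSemicontinuous).add
      (by fun_prop : Continuous fun y : Y => ‖y - u.1‖ ^ 2 / 2).lowerSemicontinuous)
    (fun y => by
      have h :=
        ((hconc y).neg.add_const (-(‖y - u.1‖ ^ 2 / 2))).strongConvexOn_add_norm_sub_sq u.2
      unfold StrongConcaveOn
      convert UniformConvexOn.neg h using 1
      ext z
      simp only [L, Pi.neg_apply, Pi.add_apply]
      ring)
    (fun y => ((husc y).add
      (by fun_prop : Continuous fun z : Z => -(‖z - u.2‖ ^ 2 / 2)).upperSemicontinuous).add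
      continuous_const.upperSemicontinuous)
  refine ⟨(y₀, z₀), fun w => ?_, fun w => ?_⟩
  · refine (hconv z₀).add_inner_sub_le_of_forall_le (fun y => ?_) w
    have := hy₀ y
    simp only [L] at this ⊢
    linarith
  · refine (hconc y₀).neg.add_inner_sub_le_of_forall_le (fun z => ?_) w
    have := hz₀ z
    simp only [L, Pi.neg_apply] at this ⊢
    linarith

end SaddleOperator

/-- If `K(·,z)` is convex lower semicontinuous for every `z` and `K(y,·)` is concave
upper semicontinuous for every `y`, then the associated operator `T` on the Hilbert
space `Y × Z` is maximal monotone. -/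
theorem saddleOperator_maximal_monotone
    {Y Z : Type*} [NormedAddCommGroup Y] [InnerProductSpace ℝ Y] [CompleteSpace Y]
    [NormedAddCommGroup Z] [InnerProductSpace ℝ Z] [CompleteSpace Z]
    (K : Y → Z → ℝ)
    (hconv : ∀ z : Z, ConvexOn ℝ Set.univ (fun y => K y z))
    (hlsc : ∀ z : Z, LowerSemicontinuous (fun y => K y z))
    (hconc : ∀ y : Y, ConcaveOn ℝ Set.univ (fun z => K y z))
    (husc : ∀ y : Y, UpperSemicontinuous (fun z => K y z)) :
    IsMaximalMonotoneOperatorProd (SaddleOperator K) :=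
  (isMonotoneOperatorProd_saddleOperator K).isMaximalMonotoneOperatorProd
    (exists_sub_mem_saddleOperator hconv hlsc hconc husc)
end

section
/- Let Y and Z be real Hilbert spaces and K : Y × Z → ℝ a function such that K(·,z) is convex and lower semicontinuous for every z ∈ Z, and K(y,·) is concave and upper semicontinuous for every y ∈ Y. Let T be the associated operator and define H : Y × Z → (-∞, +∞] by H(y, ζ) = sup_{z ∈ Z} ( ⟨ζ, z⟩ + K(y, z) ). Then H is convex and lower semicontinuous on the Hilbert space Y × Z, and for all y, z, y*, z* one has (y*, z*) ∈ T(y, z) if and only if (y*, z) is a subgradient of H at (y, z*), i.e. H(y, z*) + ⟨y*, y' - y⟩ + ⟨z, ζ' - z*⟩ ≤ H(y', ζ') in the extended reals for all (y', ζ') ∈ Y × Z. -/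
open scoped InnerProductSpace

/-- The partial conjugate `H(y,ζ) = sup_z (⟪ζ,z⟫ + K(y,z))`, with values in `(-∞,+∞]`. -/
noncomputable def PartialConjugate {Y Z : Type*}
    [NormedAddCommGroup Y] [InnerProductSpace ℝ Y]
    [NormedAddCommGroup Z] [InnerProductSpace ℝ Z]
    (K : Y → Z → ℝ) (p : Y × Z) : EReal :=
  ⨆ z : Z, ((⟪p.2, z⟫_ℝ + K p.1 z : ℝ) : EReal)

/-!
`H` is a supremum of the functions `(y, ζ) ↦ ⟪ζ, z⟫ + K y z`, which are convex and lower
semicontinuous in `(y, ζ)`; this gives the first two claims.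

If `z*` is a subgradient of `-K(y,·)` at `z`, then `z` attains the supremum defining `H(y, z*)`,
and the subgradient inequality of `H` at `(y, z*)` follows from that of `K(·,z)` at `y`.
Conversely, for `c > K(w,z)` Hahn–Banach, applied to the closed convex hypograph of `K(w,·)`,
gives an affine majorant of `K(w,·)` through `(z, c)`; its slope `ζ` yields
`H(w, -ζ) ≤ ⟪-ζ, z⟫ + c`. Testing the subgradient inequality of `H` at `(w, -ζ)` and letting
`c ↓ K(w,z)` gives both subgradient inequalities of `K`.
-/

theorem ConcaveOn.exists_affine_majorant {E : Type*} [TopologicalSpace E] [AddCommGroup E]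
    [Module ℝ E] [IsTopologicalAddGroup E] [ContinuousSMul ℝ E] [LocallyConvexSpace ℝ E]
    {g : E → ℝ} (hconc : ConcaveOn ℝ Set.univ g) (husc : UpperSemicontinuous g) {z : E} {c : ℝ}
    (hc : g z < c) : ∃ ψ : StrongDual ℝ E, ∀ u, g u ≤ c + ψ (u - z) := by
  have hclosed : IsClosed {p : E × ℝ | p.2 ≤ g p.1} :=
    upperSemicontinuous_iff_IsClosed_hypograph.1 husc
  have hconvex : Convex ℝ {p : E × ℝ | p.2 ≤ g p.1} := by
    simpa using hconc.convex_hypograph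
  obtain ⟨f, r, hfzc, hf⟩ :=
    geometric_hahn_banach_point_closed hconvex hclosed (not_le.2 hc : (z, c) ∉ _)
  have hsplit : ∀ v t, f (v, t) = f (v, 0) + t * f (0, 1) := fun v t => by
    rw [← smul_eq_mul, ← map_smul, ← map_add]; simp
  have hgraph : ∀ v, f (z, 0) + c * f (0, 1) < f (v, 0) + g v * f (0, 1) := fun v => by
    have := hfzc.trans (hf (v, g v) (le_refl (g v)))
    rwa [hsplit, hsplit v] at this
  have hs : f (0, 1) < 0 := by
    have := hgraph z
    nlinarith
  refine ⟨(-(f (0, 1))⁻¹) • f.comp (ContinuousLinearMap.inl ℝ E ℝ), fun u => ?_⟩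
  have hψ : ((-(f (0, 1))⁻¹) • f.comp (ContinuousLinearMap.inl ℝ E ℝ)) (u - z)
      = (f (z, 0) - f (u, 0)) / f (0, 1) := by
    simp only [map_sub, smul_apply, ContinuousLinearMap.comp_apply,
      ContinuousLinearMap.inl_apply, smul_eq_mul]
    ring
  rw [hψ, ← sub_le_iff_le_add', le_div_iff_of_neg hs]
  linarith [hgraph u]

theorem ConcaveOn.exists_inner_majorant {E : Type*} [NormedAddCommGroup E]
    [InnerProductSpace ℝ E] [CompleteSpace E] {g : E → ℝ} (hconc : ConcaveOn ℝ Set.univ g)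
    (husc : UpperSemicontinuous g) {z : E} {c : ℝ} (hc : g z < c) :
    ∃ ζ : E, ∀ u, g u ≤ c + ⟪ζ, u - z⟫_ℝ := by
  obtain ⟨ψ, hψ⟩ := hconc.exists_affine_majorant husc hc
  exact ⟨(InnerProductSpace.toDual ℝ E).symm ψ, fun u => by
    rw [InnerProductSpace.toDual_symm_apply]; exact hψ u⟩

theorem iSup_coe_ereal_le_of_convexOn {ι E : Type*} [AddCommMonoid E] [Module ℝ E]
    {f : ι → E → ℝ} (hf : ∀ i, ConvexOn ℝ Set.univ (f i)) (x y : E) {t : ℝ} (ht₀ : 0 ≤ t)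
    (ht₁ : t ≤ 1) :
    ⨆ i, ((f i (t • x + (1 - t) • y) : ℝ) : EReal) ≤
      (t : EReal) * (⨆ i, ((f i x : ℝ) : EReal)) +
        ((1 - t : ℝ) : EReal) * ⨆ i, ((f i y : ℝ) : EReal) := by
  refine iSup_le fun i => ?_
  calc ((f i (t • x + (1 - t) • y) : ℝ) : EReal)
      ≤ ((t * f i x + (1 - t) * f i y : ℝ) : EReal) :=
        EReal.coe_le_coe_iff.2 <| (hf i).2 trivial trivial ht₀ (by linarith) (by ring)
    _ = (t : EReal) * (f i x : EReal) + ((1 - t : ℝ) : EReal) * (f i y : EReal) := by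
        rw [EReal.coe_add, EReal.coe_mul, EReal.coe_mul]
    _ ≤ _ := add_le_add
        (mul_le_mul_of_nonneg_left (le_iSup (fun i => ((f i x : ℝ) : EReal)) i)
          (EReal.coe_nonneg.2 ht₀))
        (mul_le_mul_of_nonneg_left (le_iSup (fun i => ((f i y : ℝ) : EReal)) i)
          (EReal.coe_nonneg.2 (sub_nonneg.2 ht₁)))

section PartialConjugate

variable {Y Z : Type*} [NormedAddCommGroup Y] [InnerProductSpace ℝ Y]
  [NormedAddCommGroup Z] [InnerProductSpace ℝ Z] {K : Y → Z → ℝ}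

theorem le_partialConjugate (K : Y → Z → ℝ) (y : Y) (ζ u : Z) :
    ((⟪ζ, u⟫_ℝ + K y u : ℝ) : EReal) ≤ PartialConjugate K (y, ζ) :=
  le_iSup (fun u => ((⟪ζ, u⟫_ℝ + K y u : ℝ) : EReal)) u

theorem partialConjugate_le_coe {y : Y} {ζ : Z} {c : ℝ} (h : ∀ u, ⟪ζ, u⟫_ℝ + K y u ≤ c) :
    PartialConjugate K (y, ζ) ≤ c :=
  iSup_le fun u => EReal.coe_le_coe_iff.2 (h u)

theorem partialConjugate_convex (hconv : ∀ z, ConvexOn ℝ Set.univ (fun y => K y z))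
    (p q : Y × Z) {t : ℝ} (ht₀ : 0 ≤ t) (ht₁ : t ≤ 1) :
    PartialConjugate K (t • p + (1 - t) • q) ≤
      (t : EReal) * PartialConjugate K p + ((1 - t : ℝ) : EReal) * PartialConjugate K q := by
  unfold PartialConjugate
  refine iSup_coe_ereal_le_of_convexOn (f := fun u p => ⟪p.2, u⟫_ℝ + K p.1 u)
    (fun u => ?_) p q ht₀ ht₁
  exact ((innerₛₗ ℝ).flip u ∘ₗ LinearMap.snd ℝ Y Z).convexOn convex_univ
    |>.add ((hconv u).comp_linearMap (LinearMap.fst ℝ Y Z))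

theorem lowerSemicontinuous_partialConjugate
    (hlsc : ∀ z, LowerSemicontinuous (fun y => K y z)) :
    LowerSemicontinuous (PartialConjugate K) := by
  refine lowerSemicontinuous_iSup fun u => ?_
  have hreal : LowerSemicontinuous fun p : Y × Z => ⟪p.2, u⟫_ℝ + K p.1 u :=
    (continuous_snd.inner continuous_const).lowerSemicontinuous.add
      ((hlsc u).comp continuous_fst)
  exact continuous_coe_real_ereal.comp_lowerSemicontinuous hreal EReal.coe_strictMono.monotone

theorem partialConjugate_eq_of_subgradient {y : Y} {z ζ : Z}
    (h : ∀ u, -K y z + ⟪ζ, u - z⟫_ℝ ≤ -K y u) :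
    PartialConjugate K (y, ζ) = ((⟪ζ, z⟫_ℝ + K y z : ℝ) : EReal) := by
  refine le_antisymm (partialConjugate_le_coe fun u => ?_) (le_partialConjugate K y ζ z)
  have := h u
  rw [inner_sub_right] at this
  linarith

theorem subgradient_partialConjugate_of_mem_saddleOperator {y y' : Y} {z z' : Z}
    (h : (y', z') ∈ SaddleOperator K (y, z)) (w : Y) (ζ : Z) :
    PartialConjugate K (y, z') + ((⟪y', w - y⟫_ℝ : ℝ) : EReal)
      + ((⟪z, ζ - z'⟫_ℝ : ℝ) : EReal) ≤ PartialConjugate K (w, ζ) := by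
  rw [partialConjugate_eq_of_subgradient h.2, ← EReal.coe_add, ← EReal.coe_add]
  refine le_trans (EReal.coe_le_coe_iff.2 ?_) (le_partialConjugate K w ζ z)
  have hinner : ⟪z, ζ - z'⟫_ℝ = ⟪ζ, z⟫_ℝ - ⟪z', z⟫_ℝ := by
    rw [inner_sub_right, real_inner_comm ζ, real_inner_comm z']
  linarith [h.1 w]

theorem mem_saddleOperator_of_subgradient_partialConjugate [CompleteSpace Z]
    (hconc : ∀ y, ConcaveOn ℝ Set.univ (fun z => K y z))
    (husc : ∀ y, UpperSemicontinuous (fun z => K y z)) {y y' : Y} {z z' : Z}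
    (h : ∀ w ζ, PartialConjugate K (y, z') + ((⟪y', w - y⟫_ℝ : ℝ) : EReal)
      + ((⟪z, ζ - z'⟫_ℝ : ℝ) : EReal) ≤ PartialConjugate K (w, ζ)) :
    (y', z') ∈ SaddleOperator K (y, z) := by
  have key : ∀ w u, K y u + ⟪z', u - z⟫_ℝ + ⟪y', w - y⟫_ℝ ≤ K w z := by
    intro w u
    refine le_of_forall_gt_imp_ge_of_dense fun c hc => ?_
    obtain ⟨ζ, hζ⟩ := (hconc w).exists_inner_majorant (husc w) hc
    have hH : PartialConjugate K (w, -ζ) ≤ ((⟪-ζ, z⟫_ℝ + c : ℝ) : EReal) :=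
      partialConjugate_le_coe fun v => by
        have := hζ v
        rw [inner_sub_right] at this
        rw [inner_neg_left, inner_neg_left]
        linarith
    have hle := (add_le_add (add_le_add (le_partialConjugate K y z' u) le_rfl) le_rfl).trans
      ((h w (-ζ)).trans hH)
    rw [← EReal.coe_add, ← EReal.coe_add, EReal.coe_le_coe_iff] at hle
    have hinner : ⟪z, -ζ - z'⟫_ℝ = ⟪-ζ, z⟫_ℝ - ⟪z', z⟫_ℝ := by
      rw [inner_sub_right, real_inner_comm (-ζ), real_inner_comm z']
    rw [inner_sub_right]
    linarith
  refine ⟨fun w => ?_, fun u => ?_⟩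
  · simpa using key w z
  · have := key y u
    rw [sub_self, inner_zero_right, add_zero] at this
    linarith

end PartialConjugate

theorem partialConjugate_convex_lsc_and_saddleOperator_iff_subgradient_general
    {Y Z : Type*} [NormedAddCommGroup Y] [InnerProductSpace ℝ Y]
    [NormedAddCommGroup Z] [InnerProductSpace ℝ Z] [CompleteSpace Z]
    (K : Y → Z → ℝ)
    (hconv : ∀ z : Z, ConvexOn ℝ Set.univ (fun y => K y z))
    (hlsc : ∀ z : Z, LowerSemicontinuous (fun y => K y z))
    (hconc : ∀ y : Y, ConcaveOn ℝ Set.univ (fun z => K y z))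
    (husc : ∀ y : Y, UpperSemicontinuous (fun z => K y z)) :
    (∀ p q : Y × Z, ∀ t : ℝ, 0 ≤ t → t ≤ 1 →
      PartialConjugate K (t • p + (1 - t) • q) ≤
        (t : EReal) * PartialConjugate K p + ((1 - t : ℝ) : EReal) * PartialConjugate K q) ∧
    LowerSemicontinuous (PartialConjugate K) ∧
    (∀ y y' : Y, ∀ z z' : Z,
      (y', z') ∈ SaddleOperator K (y, z) ↔
        (∀ w : Y, ∀ ζ : Z,
          PartialConjugate K (y, z') + ((⟪y', w - y⟫_ℝ : ℝ) : EReal)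
            + ((⟪z, ζ - z'⟫_ℝ : ℝ) : EReal) ≤ PartialConjugate K (w, ζ))) :=
  ⟨fun p q _ ht₀ ht₁ => partialConjugate_convex hconv p q ht₀ ht₁,
    lowerSemicontinuous_partialConjugate hlsc,
    fun _ _ _ _ => ⟨subgradient_partialConjugate_of_mem_saddleOperator,
      mem_saddleOperator_of_subgradient_partialConjugate hconc husc⟩⟩

/-- Rockafellar's inversion lemma: `H(y,ζ) = sup_z (⟪ζ,z⟫ + K(y,z))` is convex and
lower semicontinuous on `Y × Z`, and `(y*, z*) ∈ T(y,z)` if and only if `(y*, z)` is a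
subgradient of `H` at `(y, z*)`. -/
theorem partialConjugate_convex_lsc_and_saddleOperator_iff_subgradient
    {Y Z : Type*} [NormedAddCommGroup Y] [InnerProductSpace ℝ Y] [CompleteSpace Y]
    [NormedAddCommGroup Z] [InnerProductSpace ℝ Z] [CompleteSpace Z]
    (K : Y → Z → ℝ)
    (hconv : ∀ z : Z, ConvexOn ℝ Set.univ (fun y => K y z))
    (hlsc : ∀ z : Z, LowerSemicontinuous (fun y => K y z))
    (hconc : ∀ y : Y, ConcaveOn ℝ Set.univ (fun z => K y z))
    (husc : ∀ y : Y, UpperSemicontinuous (fun z => K y z)) :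
    (∀ p q : Y × Z, ∀ t : ℝ, 0 ≤ t → t ≤ 1 →
      PartialConjugate K (t • p + (1 - t) • q) ≤
        (t : EReal) * PartialConjugate K p + ((1 - t : ℝ) : EReal) * PartialConjugate K q) ∧
    LowerSemicontinuous (PartialConjugate K) ∧
    (∀ y y' : Y, ∀ z z' : Z,
      (y', z') ∈ SaddleOperator K (y, z) ↔
        (∀ w : Y, ∀ ζ : Z,
          PartialConjugate K (y, z') + ((⟪y', w - y⟫_ℝ : ℝ) : EReal)
            + ((⟪z, ζ - z'⟫_ℝ : ℝ) : EReal) ≤ PartialConjugate K (w, ζ))) :=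
  partialConjugate_convex_lsc_and_saddleOperator_iff_subgradient_general K hconv hlsc hconc husc
end

section
/- Let e, g : [0, +∞) → ℝ be nonnegative Lipschitz continuous functions and let λ > 0. Suppose that for almost every t > 0 the function h = e + g is differentiable at t with h'(t) ≤ -λ e(t). Then e(t) → 0 as t → +∞. -/
/-!
Lipschitz functions are absolutely continuous, so the derivative bound integrates to
`h b + λ ∫₀ᵇ e ≤ h 0` for `h = e + g ≥ 0`; hence `e ≥ 0` is integrable on `(0, ∞)`.
An integrable Lipschitz function tends to `0` (Barbalat's lemma): if `‖e t‖ ≥ ε`, then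
`‖e‖ ≥ ε / 2` on `[t, t + w]` for a fixed `w > 0`, whereas `∫ₜ^{t+w} ‖e‖ → 0`.
-/

open Filter MeasureTheory Set
open scoped Topology NNReal

theorem AbsolutelyContinuousOnInterval.sub_le_integral_of_ae_hasDerivAt_le {f ψ : ℝ → ℝ}
    {a b : ℝ} (hab : a ≤ b) (hf : AbsolutelyContinuousOnInterval f a b)
    (hψ : IntervalIntegrable ψ volume a b)
    (hle : ∀ᵐ t ∂volume.restrict (Ioo a b), ∀ d, HasDerivAt f d t → d ≤ ψ t) :
    f b - f a ≤ ∫ t in a..b, ψ t := by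
  rw [← hf.integral_deriv_eq_sub]
  refine intervalIntegral.integral_mono_ae_restrict hab hf.intervalIntegrable_deriv hψ ?_
  have hdiff : ∀ᵐ t ∂volume.restrict (Icc a b), DifferentiableAt ℝ f t := by
    rw [ae_restrict_iff' measurableSet_Icc, ← uIcc_of_le hab]
    exact hf.ae_differentiableAt
  rw [Measure.restrict_congr_set Ioo_ae_eq_Icc.symm] at hdiff ⊢
  filter_upwards [hdiff, hle] with t ht hψt using hψt _ ht.hasDerivAt

theorem MeasureTheory.IntegrableOn.tendsto_intervalIntegral_add_atTop
    {E : Type*} [NormedAddCommGroup E] [NormedSpace ℝ E] {f : ℝ → E} {a : ℝ}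
    (hf : IntegrableOn f (Ioi a)) (w : ℝ) :
    Tendsto (fun t => ∫ s in t..t + w, f s) atTop (𝓝 0) := by
  have hlim (c : ℝ) : Tendsto (fun t => ∫ s in a..t + c, f s) atTop (𝓝 (∫ s in Ioi a, f s)) :=
    intervalIntegral_tendsto_integral_Ioi a hf (tendsto_atTop_add_const_right _ c tendsto_id)
  have hdiff := (hlim w).sub (hlim 0)
  rw [sub_self] at hdiff
  refine hdiff.congr' ?_
  filter_upwards [eventually_ge_atTop a, eventually_ge_atTop (a - w)] with t hat hawt
  have hint (c : ℝ) (hc : a ≤ t + c) : IntervalIntegrable f volume a (t + c) :=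
    (intervalIntegrable_iff_integrableOn_Ioc_of_le hc).2 (hf.mono_set Ioc_subset_Ioi_self)
  rw [intervalIntegral.integral_interval_sub_left (hint w (by linarith)) (hint 0 (by linarith)),
    add_zero]

theorem MeasureTheory.integrableOn_Ioi_of_intervalIntegral_le {f : ℝ → ℝ} {a C : ℝ}
    (hf : ContinuousOn f (Ici a)) (hf_nonneg : ∀ t, a ≤ t → 0 ≤ f t)
    (hbound : ∀ b, a ≤ b → ∫ t in a..b, f t ≤ C) : IntegrableOn f (Ioi a) := by
  refine integrableOn_Ioi_of_intervalIntegral_norm_bounded C a (b := id) (fun b => ?_)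
    tendsto_id ?_
  · exact ((hf.mono Icc_subset_Ici_self).integrableOn_Icc).mono_set Ioc_subset_Icc_self
  · filter_upwards [eventually_ge_atTop a] with b hb
    rw [intervalIntegral.integral_congr fun t ht => Real.norm_of_nonneg <|
      hf_nonneg t (uIcc_of_le hb ▸ ht).1]
    exact hbound b hb

section Barbalat

variable {E : Type*} [NormedAddCommGroup E] {f : ℝ → E} {K : ℝ≥0} {a : ℝ}

theorem LipschitzOnWith.mul_norm_le_intervalIntegral_norm (hf : LipschitzOnWith K f (Ici a))
    {t w : ℝ} (ht : a ≤ t) (hw : 0 ≤ w) :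
    w * ‖f t‖ ≤ (∫ s in t..t + w, ‖f s‖) + K * w ^ 2 := by
  have hlow : ∀ s ∈ Icc t (t + w), ‖f t‖ - K * w ≤ ‖f s‖ := by
    intro s hs
    have hts : dist t s ≤ w := by
      rw [Real.dist_eq, abs_sub_comm, abs_of_nonneg (by linarith [hs.1])]
      linarith [hs.2]
    have hdist : dist (f t) (f s) ≤ K * w :=
      (hf.dist_le_mul t ht s (ht.trans hs.1)).trans (by gcongr)
    linarith [norm_sub_norm_le (f t) (f s), dist_eq_norm (f t) (f s)]
  have hsub : uIcc t (t + w) ⊆ Ici a := by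
    rw [uIcc_of_le (by linarith)]
    exact Icc_subset_Ici_iff (by linarith) |>.2 ht
  have hcont : ContinuousOn (fun s => ‖f s‖) (uIcc t (t + w)) := hf.continuousOn.norm.mono hsub
  have := intervalIntegral.integral_mono_on (by linarith) intervalIntegrable_const
    (hcont.intervalIntegrable (μ := volume)) hlow
  rw [intervalIntegral.integral_const, add_sub_cancel_left, smul_eq_mul] at this
  nlinarith

theorem LipschitzOnWith.tendsto_atTop_zero_of_integrableOn_Ioi
    (hf : LipschitzOnWith K f (Ici a)) (hint : IntegrableOn f (Ioi a)) :
    Tendsto f atTop (𝓝 0) := by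
  rw [tendsto_zero_iff_norm_tendsto_zero]
  refine tendsto_order.2 ⟨fun ε hε => Eventually.of_forall fun t => hε.trans_le (norm_nonneg _),
    fun ε hε => ?_⟩
  set w := ε / (2 * (K + 1)) with hw_def
  have hw : 0 < w := by positivity
  have hKw : K * w ≤ ε / 2 := by
    have : (K + 1) * w = ε / 2 := by rw [hw_def]; field_simp
    nlinarith
  have hsmall := (IntegrableOn.tendsto_intervalIntegral_add_atTop hint.norm w).eventually
    (gt_mem_nhds (show (0 : ℝ) < w * (ε / 2) by positivity))
  filter_upwards [hsmall, eventually_ge_atTop a] with t hsmall_t hat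
  have := hf.mul_norm_le_intervalIntegral_norm hat hw.le
  nlinarith

end Barbalat

/-- Let `e, g : [0,∞) → ℝ` be nonnegative Lipschitz functions and `λ > 0`. If at
almost every `t > 0` where `h = e + g` is differentiable one has `h'(t) ≤ -λ e(t)`,
then `e(t) → 0` as `t → +∞`. -/
theorem tendsto_zero_of_lipschitz_of_derivative_le
    (e g : ℝ → ℝ) (lam : ℝ) (hlam : 0 < lam)
    (he_nonneg : ∀ t : ℝ, 0 ≤ t → 0 ≤ e t)
    (hg_nonneg : ∀ t : ℝ, 0 ≤ t → 0 ≤ g t)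
    (he_lip : ∃ L : NNReal, LipschitzOnWith L e (Set.Ici (0 : ℝ)))
    (hg_lip : ∃ L : NNReal, LipschitzOnWith L g (Set.Ici (0 : ℝ)))
    (hderiv : ∀ᵐ t ∂(MeasureTheory.volume.restrict (Set.Ioi (0 : ℝ))),
      ∀ d : ℝ, HasDerivAt (fun s => e s + g s) d t → d ≤ -lam * e t) :
    Tendsto e atTop (nhds 0) := by
  obtain ⟨Le, hLe⟩ := he_lip
  obtain ⟨Lg, hLg⟩ := hg_lip
  have hdissip : ∀ b, 0 ≤ b → lam * ∫ t in 0..b, e t ≤ e 0 + g 0 := by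
    intro b hb
    have hsub : uIcc 0 b ⊆ Ici 0 := by rw [uIcc_of_le hb]; exact Icc_subset_Ici_self
    have hψ : IntervalIntegrable (fun t => -lam * e t) volume 0 b :=
      ((hLe.continuousOn.mono hsub).const_smul (-lam)).intervalIntegrable
    have := ((hLe.add hLg).mono hsub).absolutelyContinuousOnInterval
      |>.sub_le_integral_of_ae_hasDerivAt_le hb hψ
        (ae_restrict_of_ae_restrict_of_subset Ioo_subset_Ioi_self hderiv)
    rw [intervalIntegral.integral_const_mul] at this
    linarith [he_nonneg b hb, hg_nonneg b hb]
  have hint : IntegrableOn e (Ioi 0) :=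
    integrableOn_Ioi_of_intervalIntegral_le hLe.continuousOn he_nonneg fun b hb => by
      rw [le_div_iff₀' hlam]
      exact hdissip b hb
  exact hLe.tendsto_atTop_zero_of_integrableOn_Ioi hint
end

section
/- Fix a finite grid of N×M pixels; identify images u with vectors in ℝ^{N·M} and dual fields ξ with elements of (ℝ²)^{N·M}, both equipped with Euclidean norms. Let ∇ʰ : ℝ^{N·M} → (ℝ²)^{N·M} be a linear map, divʰ = -(∇ʰ)* its negative adjoint, and P the componentwise projection (P ξ)_k = ξ_k / max(‖ξ_k‖, 1). Let λ > 0, f ∈ ℝ^{N·M}, and let J_h(u) = Σ_k ‖(∇ʰ u)_k‖ + (λ/2) Σ_k (u_k - f_k)² with minimizer ū. Given positive time steps δtⁿ, δτⁿ and an initialization (u⁰, ξ⁰), define the Chan–Zhu iteration ξⁿ = P(ξⁿ⁻¹ + δτⁿ ∇ʰ uⁿ⁻¹), uⁿ = uⁿ⁻¹ + δtⁿ (divʰ ξⁿ - λ(uⁿ⁻¹ - f)) for n ≥ 1. Then for every n ≥ 1, ‖uⁿ - ū‖ ≤ (1/2) ( ‖∂ₜuⁿ‖/λ + √( ‖∂ₜuⁿ‖²/λ²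 + 8 √(N·M) ‖∂ₜξⁿ‖ / λ ) ), where ∂ₜuⁿ = (uⁿ⁺¹ - uⁿ)/δtⁿ⁺¹ and ∂ₜξⁿ = (ξⁿ⁺¹ - ξⁿ)/δτⁿ⁺¹. -/
/-!
With `ψ(y) = ∑ₖ ‖yₖ‖`, the energy `J(v) = ψ(∇ʰ v) + λ/2 ‖v - f‖²` is `λ`-strongly convex, so its
minimiser satisfies `λ/2 ‖v - ū‖² ≤ J v - J ū`. Conversely, any dual field `p` with `‖pₖ‖ ≤ 1`
minorises `ψ` linearly, which bounds `J v - J ū` from above by the duality gap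
`ψ(∇ʰ v) - ⟪p, ∇ʰ v⟫` plus `⟪(∇ʰ)* p + λ (v - f), v - ū⟫ - λ/2 ‖v - ū‖²`. For `v = uⁿ` and
`p = ξⁿ⁺¹` the update rule identifies `(∇ʰ)* p + λ (v - f)` with `-∂ₜuⁿ`, and the variational
inequality of the projection bounds the `k`-th gap term by `2 ‖(∂ₜξⁿ)ₖ‖`, hence the whole gap by
`2 √(NM) ‖∂ₜξⁿ‖`. So `r = ‖uⁿ - ū‖` satisfies `λ r² ≤ ‖∂ₜuⁿ‖ r + 2 √(NM) ‖∂ₜξⁿ‖`, and solving this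
quadratic inequality gives the estimate.
-/

open scoped InnerProductSpace

/-- Images on an `N × M` grid: vectors in `ℝ^{N·M}` with the Euclidean inner product. -/
abbrev GridImage (N M : ℕ) := EuclideanSpace ℝ (Fin N × Fin M)

/-- Dual fields on an `N × M` grid: elements of `(ℝ²)^{N·M}` with the Euclidean
inner product. -/
abbrev GridField (N M : ℕ) := PiLp 2 (fun _ : Fin N × Fin M => EuclideanSpace ℝ (Fin 2))

/-- The componentwise projection on the unit ball: `(P ξ)_k = ξ_k / max(‖ξ_k‖, 1)`. -/
noncomputable def gridProj {N M : ℕ} (ξ : GridField N M) : GridField N M :=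
  WithLp.toLp 2 (fun k => (max ‖ξ k‖ 1)⁻¹ • ξ k)

open Set Filter Topology
open scoped ENNReal

noncomputable def unitBallProj {E : Type*} [NormedAddCommGroup E] [NormedSpace ℝ E] (x : E) : E :=
  (max ‖x‖ 1)⁻¹ • x

section UnitBallProj

variable {E : Type*} [NormedAddCommGroup E]

theorem norm_unitBallProj_le [NormedSpace ℝ E] (x : E) : ‖unitBallProj x‖ ≤ 1 := by
  have hpos : 0 < max ‖x‖ 1 := lt_max_of_lt_right one_pos
  rw [unitBallProj, norm_smul, norm_inv, Real.norm_of_nonneg hpos.le, inv_mul_le_iff₀ hpos,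
    mul_one]
  exact le_max_left _ _

variable [InnerProductSpace ℝ E]

theorem inner_sub_unitBallProj_nonpos (x : E) {z : E} (hz : ‖z‖ ≤ 1) :
    ⟪x - unitBallProj x, z - unitBallProj x⟫_ℝ ≤ 0 := by
  rcases le_or_gt ‖x‖ 1 with hx | hx
  · simp [unitBallProj, max_eq_right hx]
  · have hpos : 0 < ‖x‖ := one_pos.trans hx
    have hxz : ⟪x, z⟫_ℝ ≤ ‖x‖ := (real_inner_le_norm x z).trans (by nlinarith [norm_nonneg x])
    have hsub : x - unitBallProj x = (1 - ‖x‖⁻¹) • x := by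
      rw [unitBallProj, max_eq_left hx.le, sub_smul, one_smul]
    have hx_inv : ‖x‖⁻¹ ≤ 1 := inv_le_one_of_one_le₀ hx.le
    rw [hsub, real_inner_smul_left, inner_sub_right, unitBallProj, max_eq_left hx.le,
      real_inner_smul_right, real_inner_self_eq_norm_sq, inv_mul_eq_div, sq,
      mul_div_cancel_right₀ _ hpos.ne']
    exact mul_nonpos_of_nonneg_of_nonpos (by linarith) (by linarith)

theorem norm_sub_inner_unitBallProj_le {τ : ℝ} (hτ : 0 < τ) (x g : E) :
    ‖g‖ - ⟪unitBallProj (x + τ • g), g⟫_ℝ ≤ 2 * ‖τ⁻¹ • (unitBallProj (x + τ • g) - x)‖ := by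
  set p := unitBallProj (x + τ • g)
  set e := τ⁻¹ • (p - x)
  set z := ‖g‖⁻¹ • g
  have hz : ‖z‖ ≤ 1 := by
    rw [norm_smul, norm_inv, norm_norm]; exact inv_mul_le_one
  have hgz : ⟪g, z⟫_ℝ = ‖g‖ := by
    rw [real_inner_smul_right, real_inner_self_eq_norm_sq]
    rcases eq_or_ne ‖g‖ 0 with h | h
    · simp [h]
    · field_simp
  have hvar : ⟪g - e, z - p⟫_ℝ ≤ 0 := by
    have hxp : x + τ • g - p = τ • (g - e) := by
      rw [smul_sub, smul_inv_smul₀ hτ.ne']; abel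
    have := inner_sub_unitBallProj_nonpos (x + τ • g) hz
    rw [hxp, real_inner_smul_left] at this
    exact nonpos_of_mul_nonpos_right this hτ
  have hez : ⟪e, z - p⟫_ℝ ≤ 2 * ‖e‖ := by
    calc ⟪e, z - p⟫_ℝ ≤ ‖e‖ * ‖z - p‖ := real_inner_le_norm _ _
      _ ≤ ‖e‖ * (1 + 1) := by
        gcongr; exact (norm_sub_le _ _).trans (add_le_add hz (norm_unitBallProj_le _))
      _ = 2 * ‖e‖ := by ring
  rw [inner_sub_left, inner_sub_right, hgz, real_inner_comm] at hvar
  linarith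

end UnitBallProj

section PiLp

variable {ι : Type*} [Fintype ι] {β : ι → Type*}

theorem PiLp.sum_norm_le_sqrt_card_mul_norm [∀ i, SeminormedAddCommGroup (β i)]
    (x : PiLp 2 β) : ∑ i, ‖x i‖ ≤ √(Fintype.card ι) * ‖x‖ := by
  rw [PiLp.norm_eq_of_L2, ← Real.sqrt_mul (Nat.cast_nonneg _)]
  refine Real.le_sqrt_of_sq_le ?_
  simpa using sq_sum_le_card_mul_sum_sq (s := Finset.univ) (f := fun i => ‖x i‖)

theorem PiLp.convexOn_sum_norm (p : ℝ≥0∞) [∀ i, SeminormedAddCommGroup (β i)]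
    [∀ i, NormedSpace ℝ (β i)] : ConvexOn ℝ univ (fun x : PiLp p β => ∑ i, ‖x i‖) := by
  refine ⟨convex_univ, fun x _ y _ a b ha hb _ => ?_⟩
  simp only [smul_eq_mul, Finset.mul_sum, ← Finset.sum_add_distrib]
  gcongr with i
  refine (norm_add_le _ _).trans_eq ?_
  simp [norm_smul, abs_of_nonneg ha, abs_of_nonneg hb]

theorem PiLp.inner_le_sum_norm_of_norm_le_one [∀ i, NormedAddCommGroup (β i)]
    [∀ i, InnerProductSpace ℝ (β i)] {p : PiLp 2 β} (hp : ∀ i, ‖p i‖ ≤ 1) (y : PiLp 2 β) :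
    ⟪p, y⟫_ℝ ≤ ∑ i, ‖y i‖ := by
  rw [PiLp.inner_apply]
  gcongr with i
  exact (real_inner_le_norm _ _).trans (mul_le_of_le_one_left (norm_nonneg _) (hp i))

end PiLp

section StrongConvexity

variable {E : Type*} [NormedAddCommGroup E] [InnerProductSpace ℝ E]

theorem ConvexOn.strongConvexOn_add_sq_norm_sub {φ : E → ℝ} (hφ : ConvexOn ℝ univ φ) (m : ℝ)
    (f : E) : StrongConvexOn univ m (fun x => φ x + m / 2 * ‖x - f‖ ^ 2) := by
  have hshift : (fun x => φ x + m / 2 * ‖x - f‖ ^ 2 - m / 2 * ‖x‖ ^ 2) =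
      fun x => φ x + innerₛₗ ℝ (-m • f) x + m / 2 * ‖f‖ ^ 2 := by
    funext x
    rw [innerₛₗ_apply_apply, norm_sub_sq_real, real_inner_smul_left, real_inner_comm]
    ring
  rw [strongConvexOn_iff_convex, hshift]
  exact (hφ.add ((innerₛₗ ℝ (-m • f)).convexOn convex_univ)).add_const _

theorem StrongConvexOn.sq_norm_sub_le_of_isMinOn {s : Set E} {m : ℝ} {f : E → ℝ}
    (hf : StrongConvexOn s m f) {x₀ : E} (hx₀ : x₀ ∈ s) (hmin : IsMinOn f s x₀) {x : E}
    (hx : x ∈ s) : m / 2 * ‖x - x₀‖ ^ 2 ≤ f x - f x₀ := by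
  have hsmall : ∀ t ∈ Ioo (0 : ℝ) 1, (1 - t) * (m / 2 * ‖x - x₀‖ ^ 2) ≤ f x - f x₀ := by
    rintro t ⟨ht₀, ht₁⟩
    have hconv := hf.2 hx hx₀ ht₀.le (sub_nonneg.2 ht₁.le) (add_sub_cancel t 1)
    have hle := hmin (hf.1 hx hx₀ ht₀.le (sub_nonneg.2 ht₁.le) (add_sub_cancel t 1))
    simp only [smul_eq_mul, mem_ofPred_eq] at hconv hle
    nlinarith
  have hlim : Tendsto (fun t : ℝ => (1 - t) * (m / 2 * ‖x - x₀‖ ^ 2)) (𝓝[>] 0)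
      (𝓝 (m / 2 * ‖x - x₀‖ ^ 2)) := by
    refine tendsto_nhdsWithin_of_tendsto_nhds ?_
    have := ((continuous_const.sub continuous_id).mul continuous_const).tendsto
      (f := fun t : ℝ => (1 - t) * (m / 2 * ‖x - x₀‖ ^ 2)) 0
    rwa [sub_zero, one_mul] at this
  exact le_of_tendsto hlim (mem_of_superset (Ioo_mem_nhdsGT one_pos) hsmall)

end StrongConvexity

theorem mul_sq_norm_sub_le_of_isMinOn {E F : Type*} [NormedAddCommGroup E]
    [InnerProductSpace ℝ E] [FiniteDimensional ℝ E] [NormedAddCommGroup F]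
    [InnerProductSpace ℝ F] [FiniteDimensional ℝ F]
    (A : E →ₗ[ℝ] F) {ψ : F → ℝ} (hψ : ConvexOn ℝ univ ψ) {lam : ℝ} {f x₀ : E}
    (hmin : IsMinOn (fun x => ψ (A x) + lam / 2 * ‖x - f‖ ^ 2) univ x₀)
    {p : F} (hp : ∀ y, ⟪p, y⟫_ℝ ≤ ψ y) (x : E) :
    lam * ‖x - x₀‖ ^ 2 ≤
      (ψ (A x) - ⟪p, A x⟫_ℝ) + ‖LinearMap.adjoint A p + lam • (x - f)‖ * ‖x - x₀‖ := by
  have hψA : ConvexOn ℝ univ (fun x => ψ (A x)) := hψ.comp_linearMap A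
  have hgrowth :=
    (hψA.strongConvexOn_add_sq_norm_sub lam f).sq_norm_sub_le_of_isMinOn (mem_univ x₀) hmin
      (mem_univ x)
  have hdual := hp (A x₀)
  have hres : ⟪LinearMap.adjoint A p + lam • (x - f), x - x₀⟫_ℝ =
      ⟪p, A x⟫_ℝ - ⟪p, A x₀⟫_ℝ + lam * ⟪x - f, x - x₀⟫_ℝ := by
    rw [inner_add_left, LinearMap.adjoint_inner_left, map_sub, inner_sub_right,
      real_inner_smul_left]
  have hsq : ‖x₀ - f‖ ^ 2 = ‖x - f‖ ^ 2 - 2 * ⟪x - f, x - x₀⟫_ℝ + ‖x - x₀‖ ^ 2 := by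
    rw [← norm_sub_sq_real, sub_sub_sub_cancel_left]
  have hcs := real_inner_le_norm (LinearMap.adjoint A p + lam • (x - f)) (x - x₀)
  rw [hsq] at hgrowth
  linarith

theorem le_quadratic_root_of_sq_le {r a c : ℝ} (hc : 0 ≤ c) (h : r ^ 2 ≤ a * r + c) :
    r ≤ (a + √(a ^ 2 + 4 * c)) / 2 := by
  have hdisc : 0 ≤ a ^ 2 + 4 * c := by positivity
  nlinarith [Real.sq_sqrt hdisc, Real.sqrt_nonneg (a ^ 2 + 4 * c),
    sq_nonneg (2 * r - a - √(a ^ 2 + 4 * c)), sq_nonneg (2 * r - a + √(a ^ 2 + 4 * c))]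

theorem gridProj_apply {N M : ℕ} (ξ : GridField N M) (k : Fin N × Fin M) :
    gridProj ξ k = unitBallProj (ξ k) := rfl

/-- A posteriori error estimate for the Chan–Zhu primal–dual iteration for the discrete
ROF energy `J_h(u) = Σ_k ‖(∇ʰu)_k‖ + (λ/2) Σ_k (u_k - f_k)²`, with minimizer `ū`:
`‖uⁿ - ū‖ ≤ (1/2) (‖∂ₜuⁿ‖/λ + √(‖∂ₜuⁿ‖²/λ² + 8 √(N·M) ‖∂ₜξⁿ‖/λ))`. -/
theorem chan_zhu_ROF_a_posteriori_estimate
    (N M : ℕ) (gradh : GridImage N M →ₗ[ℝ] GridField N M)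
    (lam : ℝ) (hlam : 0 < lam) (f : GridImage N M)
    (Jh : GridImage N M → ℝ)
    (hJh : ∀ u, Jh u = (∑ k, ‖gradh u k‖) + lam / 2 * ∑ k, (u k - f k) ^ 2)
    (ubar : GridImage N M) (hubar : ∀ u, Jh ubar ≤ Jh u)
    (δt δτ : ℕ → ℝ) (hδt : ∀ n, 0 < δt n) (hδτ : ∀ n, 0 < δτ n)
    (u : ℕ → GridImage N M) (ξ : ℕ → GridField N M)
    (hξ_iter : ∀ n : ℕ, ξ (n + 1) = gridProj (ξ n + δτ (n + 1) • gradh (u n)))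
    (hu_iter : ∀ n : ℕ, u (n + 1) =
      u n + δt (n + 1) • ((-(LinearMap.adjoint gradh)) (ξ (n + 1)) - lam • (u n - f))) :
    ∀ n : ℕ, 1 ≤ n →
      ‖u n - ubar‖ ≤
        (1 / 2) * (‖(δt (n + 1))⁻¹ • (u (n + 1) - u n)‖ / lam +
          Real.sqrt (‖(δt (n + 1))⁻¹ • (u (n + 1) - u n)‖ ^ 2 / lam ^ 2 +
            8 * Real.sqrt (N * M) * ‖(δτ (n + 1))⁻¹ • (ξ (n + 1) - ξ n)‖ / lam)) := by
  intro n _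
  set D := (δt (n + 1))⁻¹ • (u (n + 1) - u n) with hD
  set E := (δτ (n + 1))⁻¹ • (ξ (n + 1) - ξ n) with hE
  have hres : LinearMap.adjoint gradh (ξ (n + 1)) + lam • (u n - f) = -D := by
    rw [hD, hu_iter n, add_sub_cancel_left, smul_smul, inv_mul_cancel₀ (hδt _).ne', one_smul,
      LinearMap.neg_apply]
    abel
  have hball (k : Fin N × Fin M) : ‖ξ (n + 1) k‖ ≤ 1 := by
    rw [hξ_iter n, gridProj_apply]; exact norm_unitBallProj_le _
  have hJ : Jh = fun w => (∑ k, ‖gradh w k‖) + lam / 2 * ‖w - f‖ ^ 2 := by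
    funext w
    simp [hJh, EuclideanSpace.norm_sq_eq]
  have hgap : (∑ k, ‖gradh (u n) k‖) - ⟪ξ (n + 1), gradh (u n)⟫_ℝ ≤ 2 * √(N * M) * ‖E‖ :=
    calc (∑ k, ‖gradh (u n) k‖) - ⟪ξ (n + 1), gradh (u n)⟫_ℝ
        = ∑ k, (‖gradh (u n) k‖ - ⟪ξ (n + 1) k, gradh (u n) k⟫_ℝ) := by
          rw [PiLp.inner_apply, Finset.sum_sub_distrib]
      _ ≤ ∑ k, 2 * ‖E k‖ := Finset.sum_le_sum fun k _ => by
          rw [hE, hξ_iter n, PiLp.smul_apply, PiLp.sub_apply, gridProj_apply]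
          exact norm_sub_inner_unitBallProj_le (hδτ _) _ _
      _ ≤ 2 * √(N * M) * ‖E‖ := by
          rw [← Finset.mul_sum, mul_assoc]
          gcongr
          simpa using PiLp.sum_norm_le_sqrt_card_mul_norm E
  have key := mul_sq_norm_sub_le_of_isMinOn gradh (PiLp.convexOn_sum_norm 2)
    (isMinOn_univ_iff.2 (hJ ▸ hubar)) (PiLp.inner_le_sum_norm_of_norm_le_one hball) (u n)
  rw [hres, norm_neg] at key
  have hq := le_quadratic_root_of_sq_le (r := ‖u n - ubar‖) (a := ‖D‖ / lam)
    (c := 2 * √(N * M) * ‖E‖ / lam) (by positivity) (by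
      rw [div_mul_eq_mul_div, ← add_div, le_div_iff₀ hlam]; linarith)
  have hdisc : (‖D‖ / lam) ^ 2 + 4 * (2 * √(N * M) * ‖E‖ / lam) =
      ‖D‖ ^ 2 / lam ^ 2 + 8 * √(N * M) * ‖E‖ / lam := by ring
  rw [hdisc] at hq
  linarith
end

section
/- Define u, ξ : ℝ × [0,1] → ℝ by u(t,x) = (1/2) cos(πx) sin(πt) and ξ(t,x) = (1/2) sin(πx) cos(πt). Then for all t ∈ ℝ and x ∈ [0,1]: ∂ₜu(t,x) = ∂ₓξ(t,x) and ∂ₜξ(t,x) = ∂ₓu(t,x); |ξ(t,x)| ≤ 1/2; ξ(t,0) = ξ(t,1) = 0; and ∫₀¹ u(t,x)² dx = sin²(πt)/8. In particular, the L²(0,1) norm of u(t,·) does not converge to 0 as t → +∞, so (u, ξ) is a solution of the one-dimensional primal–dual system with non-saturated constraint |ξ| < 1 and homogeneous Neumann boundary conditions that does not converge to the unique minimizer u ≡ 0 of v ↦ ∫₀¹ |v'|. -/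
/-!
Both identities between derivatives are the product rule for separated standing waves
`cos(πx) sin(πt)`, `sin(πx) cos(πt)`. The energy `sin²(πt)/8` is `1`-periodic and equals `1/8`
at `t = 1/2`, and a periodic function with a limit at `+∞` is constant, so it cannot tend to `0`.
-/

open Real Filter

theorem Function.Periodic.eq_of_tendsto_atTop {X : Type*} [TopologicalSpace X] [T2Space X]
    {f : ℝ → X} {p : ℝ} (hf : Function.Periodic f p) (hp : 0 < p) {L : X}
    (hL : Tendsto f atTop (nhds L)) (x : ℝ) : f x = L := by
  have h_orbit : Tendsto (fun n : ℕ => x + n * p) atTop atTop :=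
    tendsto_atTop_add_const_left _ x (tendsto_natCast_atTop_atTop.atTop_mul_const hp)
  have h_const : f ∘ (fun n : ℕ => x + n * p) = fun _ => f x := funext fun n => (hf.nat_mul n) x
  exact tendsto_nhds_unique tendsto_const_nhds (h_const ▸ hL.comp h_orbit)

section StandingWave

variable (a c t x : ℝ)

theorem hasDerivAt_sin_const_mul : HasDerivAt (fun s => sin (c * s)) (c * cos (c * t)) t := by
  simpa [mul_comm] using ((hasDerivAt_id t).const_mul c).sin

theorem hasDerivAt_cos_const_mul : HasDerivAt (fun s => cos (c * s)) (-(c * sin (c * t))) t := by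
  simpa [mul_comm] using ((hasDerivAt_id t).const_mul c).cos

theorem exists_hasDerivAt_time_cos_sin_eq_space_sin_cos :
    ∃ d : ℝ, HasDerivAt (fun s => a * cos (c * x) * sin (c * s)) d t ∧
      HasDerivAt (fun y => a * sin (c * y) * cos (c * t)) d x :=
  ⟨a * c * cos (c * x) * cos (c * t),
    ((hasDerivAt_sin_const_mul c t).const_mul _).congr_deriv (by ring),
    (((hasDerivAt_sin_const_mul c x).const_mul a).mul_const _).congr_deriv (by ring)⟩

theorem exists_hasDerivAt_time_sin_cos_eq_space_cos_sin :
    ∃ d : ℝ, HasDerivAt (fun s => a * sin (c * x) * cos (c * s)) d t ∧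
      HasDerivAt (fun y => a * cos (c * y) * sin (c * t)) d x :=
  ⟨-(a * c * sin (c * x) * sin (c * t)),
    ((hasDerivAt_cos_const_mul c t).const_mul _).congr_deriv (by ring),
    (((hasDerivAt_cos_const_mul c x).const_mul a).mul_const _).congr_deriv (by ring)⟩

end StandingWave

theorem integral_cos_pi_mul_sq : ∫ x in (0 : ℝ)..1, cos (π * x) ^ 2 = 1 / 2 := by
  rw [intervalIntegral.integral_comp_mul_left (fun x => cos x ^ 2) pi_ne_zero, integral_cos_sq]
  simp
  field_simp

theorem integral_cos_pi_mul_mul_const_sq (a b : ℝ) :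
    ∫ x in (0 : ℝ)..1, (a * cos (π * x) * b) ^ 2 = a ^ 2 * b ^ 2 / 2 := by
  simp only [mul_pow, mul_right_comm _ (cos _ ^ 2), intervalIntegral.integral_const_mul,
    integral_cos_pi_mul_sq]
  ring

theorem sin_pi_mul_sq_periodic : Function.Periodic (fun t => sin (π * t) ^ 2) 1 := by
  intro t
  simp [mul_add, sin_add_pi]

/-- The explicit oscillating solution of the one-dimensional primal–dual system for the
energy `v ↦ ∫₀¹ |v'|`: with `u(t,x) = (1/2)cos(πx)sin(πt)` and
`ξ(t,x) = (1/2)sin(πx)cos(πt)` one has `∂ₜu = ∂ₓξ`, `∂ₜξ = ∂ₓu`, `|ξ| ≤ 1/2` (so the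
constraint `|ξ| ≤ 1` is never saturated), `ξ(t,0) = ξ(t,1) = 0`, and
`∫₀¹ u(t,x)² dx = sin²(πt)/8`, which does not converge to `0` as `t → +∞`; hence this
solution does not converge to the unique minimizer `u ≡ 0`. -/
theorem primal_dual_oscillating_solution
    (u ξ : ℝ → ℝ → ℝ)
    (hu : u = fun t x => (1 / 2) * Real.cos (Real.pi * x) * Real.sin (Real.pi * t))
    (hξ : ξ = fun t x => (1 / 2) * Real.sin (Real.pi * x) * Real.cos (Real.pi * t)) :
    (∀ t x : ℝ, ∃ a : ℝ,
      HasDerivAt (fun s => u s x) a t ∧ HasDerivAt (fun y => ξ t y) a x) ∧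
    (∀ t x : ℝ, ∃ a : ℝ,
      HasDerivAt (fun s => ξ s x) a t ∧ HasDerivAt (fun y => u t y) a x) ∧
    (∀ t : ℝ, ∀ x ∈ Set.Icc (0 : ℝ) 1, |ξ t x| ≤ 1 / 2) ∧
    (∀ t : ℝ, ξ t 0 = 0 ∧ ξ t 1 = 0) ∧
    (∀ t : ℝ, (∫ x in (0 : ℝ)..1, (u t x) ^ 2) = Real.sin (Real.pi * t) ^ 2 / 8) ∧
    ¬ Tendsto (fun t : ℝ => ∫ x in (0 : ℝ)..1, (u t x) ^ 2) atTop (nhds 0) := by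
  subst hu hξ
  have h_energy (t : ℝ) : ∫ x in (0 : ℝ)..1, (1 / 2 * cos (π * x) * sin (π * t)) ^ 2 =
      sin (π * t) ^ 2 / 8 := by
    rw [integral_cos_pi_mul_mul_const_sq]
    ring
  refine ⟨exists_hasDerivAt_time_cos_sin_eq_space_sin_cos _ _,
    exists_hasDerivAt_time_sin_cos_eq_space_cos_sin _ _, fun t x _ => ?_,
    fun t => by simp, h_energy, fun h_tendsto => ?_⟩
  · rw [abs_mul, abs_mul, abs_of_pos one_half_pos]
    have := mul_le_mul (abs_sin_le_one (π * x)) (abs_cos_le_one (π * t)) (abs_nonneg _)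
      zero_le_one
    linarith
  · simp only [h_energy] at h_tendsto
    have h_half : sin (π * (1 / 2)) ^ 2 / 8 = 0 :=
      (sin_pi_mul_sq_periodic.comp (· / 8)).eq_of_tendsto_atTop one_pos h_tendsto (1 / 2)
    rw [mul_one_div, sin_pi_div_two] at h_half
    norm_num at h_half
end
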